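/- arXiv:2107.13636 — 5 statements merged into one kernel-verified Lean document; each statement's English description precedes it below -/
import Mathlib

section
/- For the Poisson kernel h_b(x) = b/(b^2+x^2) with b > 0, and any even nonnegative integer k, the k-th derivative satisfies |h_b^{(k)}(x)| ≤ C_k / (b^{k-1}(b^2+x^2)) for all real x, where C_k depends only on k. -/
open Complex

/-- Derivative of `x ↦ ((x:ℂ) - c)^m` for `c` off the real axis. -/
lemma pk_hasDerivAt_zpow_sub (c : ℂ) (hc : c.im ≠ 0) (m : ℤ) (x : ℝ) :
    HasDerivAt (fun y : ℝ => ((y : ℂ) - c) ^ m) ((m : ℂ) * ((x : ℂ) - c) ^ (m - 1)) x := by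
  have h0 : (x : ℂ) - c ≠ 0 := by
    intro h
    apply hc
    have := congrArg Complex.im h
    simpa using this.symm
  have h1 : HasDerivAt (fun z : ℂ => (z - c) ^ m) ((m : ℂ) * ((x : ℂ) - c) ^ (m - 1) * 1)
      (x : ℂ) := by
    exact (hasDerivAt_zpow m ((x : ℂ) - c) (Or.inl h0)).comp (x : ℂ)
      ((hasDerivAt_id ((x : ℂ))).sub_const c)
  simpa using h1.comp_ofReal

/-- Explicit formula for iterated derivatives of the complexified Poisson kernel. -/
lemma pk_formula (b : ℝ) (hb : 0 < b) (n : ℕ) :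
    iteratedDeriv n
      (fun x : ℝ => (2 * I)⁻¹ * (((x : ℂ) - I * b)⁻¹ - ((x : ℂ) + I * b)⁻¹)) =
    fun x : ℝ => (-1 : ℂ) ^ n * (Nat.factorial n : ℂ) * (2 * I)⁻¹ *
      (((x : ℂ) - I * b) ^ (-(n : ℤ) - 1) - ((x : ℂ) + I * b) ^ (-(n : ℤ) - 1)) := by
  have him1 : (I * (b : ℂ)).im ≠ 0 := by simp [hb.ne']
  have him2 : (-(I * (b : ℂ))).im ≠ 0 := by simp [hb.ne']
  induction n with
  | zero =>
    funext x
    simp [zpow_neg, zpow_one]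
  | succ n ih =>
    rw [iteratedDeriv_succ, ih]
    funext x
    have h1 := pk_hasDerivAt_zpow_sub (I * b) him1 (-(n : ℤ) - 1) x
    have h2 := pk_hasDerivAt_zpow_sub (-(I * b)) him2 (-(n : ℤ) - 1) x
    have h2' : HasDerivAt (fun y : ℝ => ((y : ℂ) + I * b) ^ (-(n : ℤ) - 1))
        ((-(n : ℤ) - 1 : ℂ) * ((x : ℂ) + I * b) ^ (-(n : ℤ) - 1 - 1)) x := by
      push_cast at h2
      simpa [sub_neg_eq_add] using h2
    have h1' : HasDerivAt (fun y : ℝ => ((y : ℂ) - I * b) ^ (-(n : ℤ) - 1))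
        ((-(n : ℤ) - 1 : ℂ) * ((x : ℂ) - I * b) ^ (-(n : ℤ) - 1 - 1)) x := by
      push_cast at h1
      exact h1
    have h : HasDerivAt
        (fun y : ℝ => (-1 : ℂ) ^ n * (Nat.factorial n : ℂ) * (2 * I)⁻¹ *
          (((y : ℂ) - I * b) ^ (-(n : ℤ) - 1) - ((y : ℂ) + I * b) ^ (-(n : ℤ) - 1)))
        ((-1 : ℂ) ^ n * (Nat.factorial n : ℂ) * (2 * I)⁻¹ *
          ((-(n : ℤ) - 1 : ℂ) * ((x : ℂ) - I * b) ^ (-(n : ℤ) - 1 - 1) -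
           (-(n : ℤ) - 1 : ℂ) * ((x : ℂ) + I * b) ^ (-(n : ℤ) - 1 - 1))) x :=
      (h1'.sub h2').const_mul _
    rw [h.deriv]
    have he1 : (-(n : ℤ) - 1 - 1 : ℤ) = -((n : ℤ) + 1) - 1 := by ring
    have hfac : (Nat.factorial (n+1) : ℂ) = ((n : ℂ) + 1) * (Nat.factorial n : ℂ) := by
      push_cast [Nat.factorial_succ]; ring
    rw [he1]
    push_cast
    rw [hfac]
    ring

/-- Norm computation: `|(x:ℂ) - I*b| = sqrt (b^2 + x^2)`. -/
lemma pk_abs_sub (b x : ℝ) : ‖((x : ℂ) - I * b)‖ = Real.sqrt (b ^ 2 + x ^ 2) := by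
  rw [Complex.norm_def, Complex.normSq_apply]
  congr 1
  simp [Complex.sub_re, Complex.sub_im]
  ring

lemma pk_abs_add (b x : ℝ) : ‖((x : ℂ) + I * b)‖ = Real.sqrt (b ^ 2 + x ^ 2) := by
  rw [Complex.norm_def, Complex.normSq_apply]
  congr 1
  simp [Complex.add_re, Complex.add_im]
  ring

/-- For the Poisson kernel `h_b(x) = b/(b^2+x^2)` with `b > 0` and any even `k`,
`|h_b^{(k)}(x)| ≤ C_k / (b^{k-1} (b^2+x^2))`, with `C_k` depending only on `k`. -/
theorem poisson_kernel_even_deriv_bound (k : ℕ) (hk : Even k) :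
    ∃ C : ℝ, 0 < C ∧ ∀ b : ℝ, 0 < b → ∀ x : ℝ,
      |iteratedDeriv k (fun x : ℝ => b / (b ^ 2 + x ^ 2)) x|
        ≤ C / (b ^ ((k : ℤ) - 1) * (b ^ 2 + x ^ 2)) := by
  rcases Nat.eq_zero_or_pos k with hk0 | hkpos
  · subst hk0
    refine ⟨1, one_pos, fun b hb x => ?_⟩
    have hden : (0:ℝ) < b ^ 2 + x ^ 2 := by positivity
    rw [iteratedDeriv_zero]
    rw [_root_.abs_of_nonneg (by positivity)]
    have h1 : b ^ (((0 : ℕ) : ℤ) - 1) = b⁻¹ := by norm_num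
    rw [h1]
    apply le_of_eq
    field_simp
  · refine ⟨(Nat.factorial k : ℝ), by positivity, fun b hb x => ?_⟩
    have hden : (0:ℝ) < b ^ 2 + x ^ 2 := by positivity
    -- f = re ∘ g is irrelevant; use linear isometry ofReal
    set f : ℝ → ℝ := fun x : ℝ => b / (b ^ 2 + x ^ 2) with hf
    have hne : ∀ y : ℝ, b ^ 2 + y ^ 2 ≠ 0 := fun y => by positivity
    have hcd : ContDiff ℝ (⊤ : ℕ∞) f :=
      contDiff_const.div (contDiff_const.add (contDiff_id.pow 2)) hne
    have key : |iteratedDeriv k f x| =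
        ‖iteratedDeriv k (fun y : ℝ => ((f y : ℝ) : ℂ)) x‖ := by
      rw [← Real.norm_eq_abs, ← norm_iteratedFDeriv_eq_norm_iteratedDeriv,
        ← norm_iteratedFDeriv_eq_norm_iteratedDeriv]
      exact ((RCLike.ofRealLI (K := ℂ)).norm_iteratedFDeriv_comp_left hcd.contDiffAt (x := x) (mod_cast le_top)).symm
    have hg : (fun y : ℝ => ((f y : ℝ) : ℂ)) =
        fun y : ℝ => (2 * I)⁻¹ * (((y : ℂ) - I * b)⁻¹ - ((y : ℂ) + I * b)⁻¹) := by
      funext y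
      have h1 : ((y : ℂ) - I * b) ≠ 0 := by
        intro h
        have := congrArg Complex.im h
        simp at this
        exact hb.ne' this
      have h2 : ((y : ℂ) + I * b) ≠ 0 := by
        intro h
        have := congrArg Complex.im h
        simp at this
        exact hb.ne' this
      have h3 : ((b : ℂ) ^ 2 + (y : ℂ) ^ 2) ≠ 0 := by
        have := mul_ne_zero h1 h2
        intro h
        apply this
        linear_combination h - (b : ℂ) ^ 2 * Complex.I_sq
      have key : ((y : ℂ) - I * b)⁻¹ - ((y : ℂ) + I * b)⁻¹ =
          2 * I * b / ((b : ℂ) ^ 2 + (y : ℂ) ^ 2) := by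
        rw [inv_sub_inv h1 h2]
        rw [div_eq_div_iff (mul_ne_zero h1 h2) h3]
        linear_combination (2 * I * (b:ℂ)^3 : ℂ) * Complex.I_sq
      rw [hf]
      push_cast
      rw [key]
      field_simp
    rw [key, hg, pk_formula b hb k]
    have hs : Real.sqrt (b ^ 2 + x ^ 2) > 0 := Real.sqrt_pos.2 hden
    set s := Real.sqrt (b ^ 2 + x ^ 2) with hsdef
    have hs2 : s ^ 2 = b ^ 2 + x ^ 2 := Real.sq_sqrt hden.le
    have habs1 : ‖(((x : ℂ) - I * b) ^ (-(k : ℤ) - 1))‖ = s ^ (-(k : ℤ) - 1) := by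
      rw [norm_zpow, pk_abs_sub]
    have habs2 : ‖(((x : ℂ) + I * b) ^ (-(k : ℤ) - 1))‖ = s ^ (-(k : ℤ) - 1) := by
      rw [norm_zpow, pk_abs_add]
    have hnorm : ‖(-1 : ℂ) ^ k * (Nat.factorial k : ℂ) * (2 * I)⁻¹ *
        (((x : ℂ) - I * b) ^ (-(k : ℤ) - 1) - ((x : ℂ) + I * b) ^ (-(k : ℤ) - 1))‖
        ≤ (Nat.factorial k : ℝ) * s ^ (-(k : ℤ) - 1) := by
      rw [norm_mul, norm_mul, norm_mul]
      have : ‖((x : ℂ) - I * b) ^ (-(k : ℤ) - 1) - ((x : ℂ) + I * b) ^ (-(k : ℤ) - 1)‖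
          ≤ 2 * s ^ (-(k : ℤ) - 1) := by
        calc ‖((x : ℂ) - I * b) ^ (-(k : ℤ) - 1) - ((x : ℂ) + I * b) ^ (-(k : ℤ) - 1)‖
            ≤ ‖((x : ℂ) - I * b) ^ (-(k : ℤ) - 1)‖ + ‖((x : ℂ) + I * b) ^ (-(k : ℤ) - 1)‖ :=
              norm_sub_le _ _
          _ = 2 * s ^ (-(k : ℤ) - 1) := by
              rw [habs1, habs2]; ring
      have h12 : ‖((2 : ℂ) * I)⁻¹‖ = 1 / 2 := by
        rw [norm_inv, norm_mul]
        simp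
      calc ‖(-1 : ℂ) ^ k‖ * ‖(Nat.factorial k : ℂ)‖ * ‖((2 : ℂ) * I)⁻¹‖ *
            ‖((x : ℂ) - I * b) ^ (-(k : ℤ) - 1) - ((x : ℂ) + I * b) ^ (-(k : ℤ) - 1)‖
          ≤ 1 * (Nat.factorial k : ℝ) * (1 / 2) * (2 * s ^ (-(k : ℤ) - 1)) := by
            rw [h12]
            gcongr
            · simp
            · simp
        _ = (Nat.factorial k : ℝ) * s ^ (-(k : ℤ) - 1) := by ring
    refine hnorm.trans ?_
    -- remains: k! * s^(-(k)-1) ≤ k! / (b^(k-1) * s^2)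
    have hbs : b ≤ s := by
      rw [hsdef]
      nlinarith [Real.sq_sqrt hden.le, Real.sqrt_nonneg (b ^ 2 + x ^ 2), sq_nonneg x]
    have hbk : b ^ ((k : ℤ) - 1) ≤ s ^ ((k : ℤ) - 1) := by
      have h1 : (0 : ℤ) ≤ (k : ℤ) - 1 := by omega
      lift ((k : ℤ) - 1) to ℕ using h1 with m hm
      rw [zpow_natCast, zpow_natCast]
      exact pow_le_pow_left₀ hb.le hbs m
    have hkey : b ^ ((k : ℤ) - 1) * (b ^ 2 + x ^ 2) ≤ s ^ ((k : ℤ) + 1) := by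
      calc b ^ ((k : ℤ) - 1) * (b ^ 2 + x ^ 2) ≤ s ^ ((k : ℤ) - 1) * (b ^ 2 + x ^ 2) := by
            gcongr
        _ = s ^ ((k : ℤ) - 1) * s ^ ((2 : ℕ) : ℤ) := by rw [zpow_natCast, ← hs2]
        _ = s ^ ((k : ℤ) + 1) := by rw [← zpow_add₀ hs.ne']; congr 1; ring
    have hpos1 : (0:ℝ) < b ^ ((k : ℤ) - 1) * (b ^ 2 + x ^ 2) := by positivity
    have hrw : (Nat.factorial k : ℝ) * s ^ (-(k : ℤ) - 1) =
        (Nat.factorial k : ℝ) / s ^ ((k : ℤ) + 1) := by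
      rw [show -(k : ℤ) - 1 = -((k : ℤ) + 1) from by ring, zpow_neg, ← div_eq_mul_inv]
    rw [hrw]
    gcongr
end

section
/- For the function ℓ_b(x) = (b^2-x^2)/(b^2+x^2)^2 with b > 0, and any even nonnegative integer k, the k-th derivative satisfies |ℓ_b^{(k)}(x)| ≤ C_k / (b^k (b^2+x^2)) for all real x, where C_k depends only on k. -/
open Complex in
/-- For `ℓ_b(x) = (b^2-x^2)/(b^2+x^2)^2` with `b > 0` and any even `k`,
`|ℓ_b^{(k)}(x)| ≤ C_k / (b^k (b^2+x^2))`, with `C_k` depending only on `k`. -/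
theorem ell_kernel_even_deriv_bound (k : ℕ) (hk : Even k) :
    ∃ C : ℝ, 0 < C ∧ ∀ b : ℝ, 0 < b → ∀ x : ℝ,
      |iteratedDeriv k (fun x : ℝ => (b ^ 2 - x ^ 2) / (b ^ 2 + x ^ 2) ^ 2) x|
        ≤ C / (b ^ k * (b ^ 2 + x ^ 2)) := by
  refine ⟨((k+1).factorial : ℝ), by positivity, ?_⟩
  intro b hb x
  have hne : ∀ y : ℝ, (y:ℂ) - b*Complex.I ≠ 0 := by
    intro y h
    have := congrArg Complex.im h
    simp at this
    exact hb.ne' this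
  -- key induction
  have key : ∀ n : ℕ, ∃ c : ℂ, ‖c‖ ≤ ((n+1).factorial : ℝ) ∧
      iteratedDeriv n (fun x : ℝ => (b ^ 2 - x ^ 2) / (b ^ 2 + x ^ 2) ^ 2)
        = fun y : ℝ => ((c : ℂ) * ((y:ℂ) - b*Complex.I) ^ (-(2 + (n:ℤ)))).re := by
    intro n
    induction n with
    | zero =>
      refine ⟨-1, by simp [Nat.factorial], ?_⟩
      rw [iteratedDeriv_zero]
      funext y
      have hz : ((y:ℂ) - b*Complex.I) ^ (2:ℕ) =
          Complex.mk (y^2 - b^2) (-(2*b*y)) := by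
        apply Complex.ext <;> simp [pow_two] <;> ring
      simp only [Nat.cast_zero, add_zero, zpow_neg]
      rw [show ((2:ℤ)) = ((2:ℕ):ℤ) by norm_num, zpow_natCast, hz]
      simp [Complex.inv_re, Complex.normSq_mk]
      rw [show (y^2-b^2)*(y^2-b^2) + 2*b*y*(2*b*y) = (b^2+y^2)^2 by ring]
      ring
    | succ n ih =>
      obtain ⟨c, hc, hd⟩ := ih
      refine ⟨c * (-(2 + (n:ℤ)) : ℤ), ?_, ?_⟩
      · rw [norm_mul]
        have habsint : ‖((-(2 + (n:ℤ)) : ℤ) : ℂ)‖ = (n:ℝ) + 2 := by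
          rw [Complex.norm_intCast]
          have h5 : ((-(2 + (n:ℤ)) : ℤ) : ℝ) = -((n:ℝ)+2) := by push_cast; ring
          rw [h5, abs_neg]
          exact abs_of_nonneg (by positivity)
        rw [habsint]
        calc ‖c‖ * ((n:ℝ) + 2)
            ≤ ((n+1).factorial : ℝ) * ((n:ℝ)+2) :=
              mul_le_mul_of_nonneg_right hc (by positivity)
          _ = (((n+1)+1).factorial : ℝ) := by
              rw [Nat.factorial_succ (n+1)]
              push_cast; ring
      · rw [iteratedDeriv_succ, hd]
        funext y
        have h1 : HasDerivAt (fun z : ℂ => c * (z - b*Complex.I) ^ (-(2 + (n:ℤ))))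
            (c * ((-(2 + (n:ℤ)) : ℤ) * ((y:ℂ) - b*Complex.I) ^ (-(2 + (n:ℤ)) - 1))) (y:ℂ) := by
          have hzp := (hasDerivAt_zpow (-(2 + (n:ℤ))) ((y:ℂ) - b*Complex.I) (Or.inl (hne y)))
          have hsub : HasDerivAt (fun z : ℂ => z - b*Complex.I) 1 (y:ℂ) :=
            (hasDerivAt_id _).sub_const _
          simpa [mul_comm] using (hzp.comp (y:ℂ) hsub).const_mul c
        have h2 := h1.comp_ofReal
        have h3 := Complex.reCLM.hasFDerivAt.comp_hasDerivAt y h2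
        have h4 : HasDerivAt
            (fun y : ℝ => (c * ((y:ℂ) - b*Complex.I) ^ (-(2 + (n:ℤ)))).re)
            ((c * (((-(2 + (n:ℤ)) : ℤ) : ℂ) * ((y:ℂ) - b*Complex.I) ^ (-(2 + (n:ℤ)) - 1))).re)
            y := h3
        rw [h4.deriv]
        congr 1
        rw [show -(2 + (n:ℤ)) - 1 = -(2 + ((n:ℕ)+1:ℤ)) by push_cast; ring]
        push_cast
        ring
  obtain ⟨c, hc, hd⟩ := key k
  rw [hd]
  have habs : ‖((x:ℂ) - b*Complex.I)‖ = Real.sqrt (x^2 + b^2) := by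
    rw [Complex.norm_def]
    congr 1
    simp [Complex.normSq_apply]
    ring
  obtain ⟨m, hm⟩ := hk
  have hS : (0:ℝ) < b^2 + x^2 := by positivity
  calc |((c : ℂ) * ((x:ℂ) - b*Complex.I) ^ (-(2 + (k:ℤ)))).re|
      ≤ ‖((c : ℂ) * ((x:ℂ) - b*Complex.I) ^ (-(2 + (k:ℤ))))‖ :=
        Complex.abs_re_le_norm _
    _ = ‖c‖ * (Real.sqrt (x^2 + b^2)) ^ (-(2 + (k:ℤ))) := by
        rw [norm_mul, norm_zpow, habs]
    _ ≤ ((k+1).factorial : ℝ) * (b ^ k * (b^2 + x^2))⁻¹ := by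
        apply mul_le_mul hc ?_ (by positivity) (by positivity)
        rw [zpow_neg, show (2 + (k:ℤ)) = ((k+2 : ℕ) : ℤ) by push_cast; ring, zpow_natCast]
        apply inv_anti₀ (by positivity)
        have hsq : Real.sqrt (x^2 + b^2) ^ (k+2) = (x^2+b^2) ^ (m+1) := by
          rw [show k + 2 = 2*(m+1) by omega, pow_mul, Real.sq_sqrt (by positivity)]
        rw [hsq]
        calc b ^ k * (b^2 + x^2) = (b^2)^m * (b^2+x^2) := by
              rw [← pow_mul, show 2*m = k by omega]
          _ ≤ (x^2+b^2)^m * (x^2+b^2) := by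
              apply mul_le_mul ?_ (by ring_nf; rfl ) (le_of_lt hS) (by positivity)
              exact pow_le_pow_left₀ (by positivity) (by nlinarith) m
          _ = (x^2+b^2)^(m+1) := by ring
    _ = ((k+1).factorial : ℝ) / (b ^ k * (b^2 + x^2)) := by rw [div_eq_mul_inv]
end

section
/- For b > 0, the Fourier transform of ℓ_b(x) = (b^2-x^2)/(b^2+x^2)^2 is ℓ̂_b(y) = 2π^2 |y| e^{-2π b |y|}, with the convention f̂(y) = ∫_ℝ e^{-2πixy} f(x) dx. -/
open Real Complex FourierTransform MeasureTheory Set Filter Topology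

/-- Laplace-type integral: `∫_0^∞ t e^{-ct} dt = 1/c²` for `re c > 0`. -/
lemma laplace_t_aux {c : ℂ} (hc : 0 < c.re) :
    ∫ t in Ioi (0:ℝ), (t : ℂ) * Complex.exp (-(c * t)) = 1 / c ^ 2 := by
  have hc0 : c ≠ 0 := by
    intro h; rw [h] at hc; simp at hc
  set F : ℝ → ℂ := fun t => -(((t : ℂ) / c + 1 / c ^ 2) * Complex.exp (-(c * t))) with hFdef
  have hderiv : ∀ t : ℝ, HasDerivAt F ((t : ℂ) * Complex.exp (-(c * t))) t := by
    intro t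
    have H : HasDerivAt (fun z : ℂ => -((z / c + 1 / c ^ 2) * Complex.exp (-(c * z))))
        ((t : ℂ) * Complex.exp (-(c * (t : ℂ)))) (t : ℂ) := by
      have h1 : HasDerivAt (fun z : ℂ => z / c + 1 / c ^ 2) (1 / c) (t : ℂ) := by
        have := ((hasDerivAt_id ((t : ℝ) : ℂ)).div_const c).add_const (1 / c ^ 2)
        simpa [one_div] using this
      have h3 : HasDerivAt (fun z : ℂ => -(c * z)) (-c) ((t : ℝ) : ℂ) := by
        simpa using ((hasDerivAt_id ((t : ℝ) : ℂ)).const_mul c).fun_neg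
      have h2 := h3.cexp
      have := (h1.fun_mul h2).fun_neg
      refine this.congr_deriv ?_
      linear_combination ((t : ℂ) * Complex.exp (-(c * t)) + c⁻¹ * Complex.exp (-(c * t))) * mul_inv_cancel₀ hc0
    exact H.comp_ofReal
  have hint : IntegrableOn (fun t : ℝ => (t : ℂ) * Complex.exp (-(c * t))) (Ioi 0) := by
    have h1 : IntegrableOn (fun x : ℝ => x ^ (1:ℝ) * Real.exp (-c.re * x ^ (1:ℝ))) (Ioi 0) :=
      integrableOn_rpow_mul_exp_neg_mul_rpow (by norm_num) zero_lt_one hc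
    refine (h1.congr_fun (fun x hx => by rw [Real.rpow_one]) measurableSet_Ioi).mono'
      ?_ ?_
    · exact (Continuous.mul (by fun_prop) (by fun_prop)).aestronglyMeasurable.restrict
    · filter_upwards [ae_restrict_mem measurableSet_Ioi] with t ht
      simp only [norm_mul, Complex.norm_exp, Complex.norm_real]
      simp only [Complex.norm_real, Real.norm_eq_abs, Complex.neg_re, Complex.mul_re,
        Complex.ofReal_re, Complex.ofReal_im, mul_zero, sub_zero]
      rw [abs_of_pos (mem_Ioi.mp ht)]
      ring_nf
      exact le_rfl
  have htend : Tendsto F atTop (𝓝 0) := by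
    apply squeeze_zero_norm' (a := fun t : ℝ =>
      t * ‖c‖⁻¹ * Real.exp (-c.re * t) + ‖c‖⁻¹ ^ 2 * Real.exp (-c.re * t))
    · filter_upwards [eventually_ge_atTop (0:ℝ)] with t ht
      have : ‖F t‖ = ‖(t : ℂ) / c + 1 / c ^ 2‖ * Real.exp (-(c.re * t)) := by
        rw [hFdef]
        simp only [norm_neg, norm_mul, Complex.norm_exp]
        congr 2
        simp [Complex.neg_re, Complex.mul_re]
      rw [this]
      have hb1 : ‖(t : ℂ) / c + 1 / c ^ 2‖ ≤ t * ‖c‖⁻¹ + ‖c‖⁻¹ ^ 2 := by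
        refine (norm_add_le _ _).trans ?_
        gcongr
        · rw [norm_div, Complex.norm_real, Real.norm_eq_abs, _root_.abs_of_nonneg ht, div_eq_mul_inv]
        · rw [norm_div, norm_one, norm_pow, one_div, inv_pow]
      calc ‖(t : ℂ) / c + 1 / c ^ 2‖ * Real.exp (-(c.re * t))
          ≤ (t * ‖c‖⁻¹ + ‖c‖⁻¹ ^ 2) * Real.exp (-(c.re * t)) := by
            gcongr
        _ = t * ‖c‖⁻¹ * Real.exp (-c.re * t) + ‖c‖⁻¹ ^ 2 * Real.exp (-c.re * t) := by
            rw [neg_mul]; ring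
    · have t1 : Tendsto (fun t : ℝ => t * ‖c‖⁻¹ * Real.exp (-c.re * t)) atTop (𝓝 0) := by
        have := (tendsto_rpow_mul_exp_neg_mul_atTop_nhds_zero 1 c.re hc).mul_const ‖c‖⁻¹
        rw [zero_mul] at this
        apply this.congr' _
        filter_upwards [eventually_ge_atTop (0:ℝ)] with t ht
        rw [Real.rpow_one]; ring
      have t2 : Tendsto (fun t : ℝ => ‖c‖⁻¹ ^ 2 * Real.exp (-c.re * t)) atTop (𝓝 0) := by
        have : Tendsto (fun t : ℝ => Real.exp (-c.re * t)) atTop (𝓝 0) := by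
          apply Real.tendsto_exp_atBot.comp
          exact tendsto_id.const_mul_atTop_of_neg (by linarith)
        have h := this.const_mul (‖c‖⁻¹ ^ 2)
        rw [mul_zero] at h
        exact h
      simpa using t1.add t2
  have := integral_Ioi_of_hasDerivAt_of_tendsto
    (a := 0) (m := 0) (hderiv 0).continuousAt.continuousWithinAt
    (fun x _ => hderiv x) hint htend
  rw [this, hFdef]
  simp

/-- The auxiliary function whose Fourier transform is `1/(b+ix)²`. -/
noncomputable def hfun (b : ℝ) : ℝ → ℂ :=
  fun t => ((4 * π ^ 2 * max t 0 * Real.exp (-(2 * π * b * max t 0)) : ℝ) : ℂ)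

lemma continuous_hfun (b : ℝ) : Continuous (hfun b) := by
  apply Complex.continuous_ofReal.comp
  fun_prop

lemma hfun_eq_indicator (b : ℝ) : hfun b =
    (Ici (0:ℝ)).indicator
      (fun t : ℝ => ((4 * π ^ 2 * t * Real.exp (-(2 * π * b * t)) : ℝ) : ℂ)) := by
  funext t
  by_cases h : (0:ℝ) ≤ t
  · rw [Set.indicator_of_mem (mem_Ici.mpr h)]
    simp [hfun, max_eq_left h]
  · rw [Set.indicator_of_notMem (by simpa using h)]
    have : max t 0 = 0 := max_eq_right (le_of_not_ge h)
    simp [hfun, this]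

lemma integrable_hfun (b : ℝ) (hb : 0 < b) : Integrable (hfun b) := by
  rw [hfun_eq_indicator]
  rw [integrable_indicator_iff measurableSet_Ici, IntegrableOn,
    Measure.restrict_congr_set Ioi_ae_eq_Ici.symm, ← IntegrableOn]
  have h1 : IntegrableOn (fun x : ℝ => x ^ (1:ℝ) * Real.exp (-(2*π*b) * x ^ (1:ℝ))) (Ioi 0) :=
    integrableOn_rpow_mul_exp_neg_mul_rpow (by norm_num) zero_lt_one (by positivity)
  have h2 : IntegrableOn (fun x : ℝ => x * Real.exp (-(2*π*b) * x)) (Ioi 0) :=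
    h1.congr_fun (fun x hx => by simp only [Real.rpow_one]) measurableSet_Ioi
  have h3 : IntegrableOn (fun x : ℝ => ((4 * π ^ 2 * (x * Real.exp (-(2*π*b) * x)) : ℝ) : ℂ))
      (Ioi 0) := (h2.const_mul (4 * π ^ 2)).ofReal (𝕜 := ℂ)
  apply IntegrableOn.congr_fun h3 _ measurableSet_Ioi
  intro x hx
  push_cast
  ring_nf

lemma fourier_hfun (b : ℝ) (hb : 0 < b) (x : ℝ) :
    𝓕 (hfun b) x = 1 / ((b : ℂ) + x * Complex.I) ^ 2 := by
  set c : ℂ := 2 * π * b + 2 * π * x * Complex.I with hc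
  have hcre : 0 < c.re := by simp [hc]; positivity
  have hc4 : c ^ 2 = 4 * π ^ 2 * ((b : ℂ) + x * Complex.I) ^ 2 := by
    rw [hc]; ring
  have hbx : ((b : ℂ) + x * Complex.I) ≠ 0 := by
    intro h
    have := congrArg Complex.re h
    simp at this
    exact absurd this (ne_of_gt hb)
  rw [Real.fourier_real_eq_integral_exp_smul]
  have key : ∀ v : ℝ, Complex.exp (↑(-2 * π * v * x) * Complex.I) • hfun b v
      = (Ici (0:ℝ)).indicator
          (fun v : ℝ => (4 * π ^ 2 : ℂ) * ((v : ℂ) * Complex.exp (-(c * v)))) v := by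
    intro v
    by_cases h : (0:ℝ) ≤ v
    · rw [Set.indicator_of_mem (mem_Ici.mpr h)]
      rw [hfun]
      rw [max_eq_left h]
      rw [smul_eq_mul]
      push_cast
      rw [show Complex.exp (-2 * (π:ℂ) * v * x * Complex.I)
            * (4 * (π:ℂ) ^ 2 * v * Complex.exp (-(2 * (π:ℂ) * b * v)))
          = 4 * (π:ℂ) ^ 2 * ((v:ℂ) * (Complex.exp (-2 * (π:ℂ) * v * x * Complex.I)
            * Complex.exp (-(2 * (π:ℂ) * b * v)))) from by ring,
        ← Complex.exp_add]
      congr 2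
      rw [hc]
      ring
    · rw [Set.indicator_of_notMem (by simpa using h)]
      have : max v 0 = 0 := max_eq_right (le_of_not_ge h)
      simp [hfun, this]
  rw [MeasureTheory.integral_congr_ae (Filter.Eventually.of_forall key)]
  rw [MeasureTheory.integral_indicator measurableSet_Ici]
  rw [Measure.restrict_congr_set Ioi_ae_eq_Ici.symm]
  rw [MeasureTheory.integral_const_mul, laplace_t_aux hcre, hc4]
  have hπ : (π : ℂ) ≠ 0 := Complex.ofReal_ne_zero.mpr Real.pi_ne_zero
  have h2 : ((b:ℂ) + x * Complex.I) ^ 2 ≠ 0 := pow_ne_zero _ hbx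
  field_simp

/-- The function `1/(b+ix)²`. -/
noncomputable def gfun (b : ℝ) : ℝ → ℂ := fun x => 1 / ((b : ℂ) + x * Complex.I) ^ 2

lemma gfun_ne (b : ℝ) (hb : 0 < b) (x : ℝ) : ((b : ℂ) + x * Complex.I) ≠ 0 := by
  intro h
  have := congrArg Complex.re h
  simp at this
  exact absurd this (ne_of_gt hb)

lemma integrable_gfun (b : ℝ) (hb : 0 < b) : Integrable (gfun b) := by
  have hcont : Continuous (gfun b) := by
    apply continuous_const.div
    · fun_prop
    · exact fun x => pow_ne_zero _ (gfun_ne b hb x)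
  set C := max 1 (1 / b ^ 2) with hC
  apply (integrable_inv_one_add_sq.const_mul C).mono' hcont.aestronglyMeasurable
  filter_upwards with x
  have hnorm : ‖gfun b x‖ = 1 / (b ^ 2 + x ^ 2) := by
    rw [gfun, norm_div, norm_one, norm_pow]
    congr 1
    rw [Complex.sq_norm, Complex.normSq_add_mul_I]
  rw [hnorm]
  have h1 : (1:ℝ) ≤ C := le_max_left _ _
  have h2 : 1 / b ^ 2 ≤ C := le_max_right _ _
  rw [div_le_iff₀ (by positivity), mul_comm (C), mul_assoc]
  rw [inv_mul_eq_div, le_div_iff₀ (by positivity)]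
  have : (1 + x ^ 2) ≤ C * (b ^ 2 + x ^ 2) := by
    have hb2 : 1 ≤ C * b ^ 2 := by
      rw [← div_le_iff₀ (by positivity)] at *
      calc (1:ℝ) / b^2 ≤ C := h2
        _ = C := rfl
    nlinarith [sq_nonneg x]
  linarith [this]

lemma ell_eq (b : ℝ) (hb : 0 < b) (x : ℝ) :
    (((b ^ 2 - x ^ 2) / (b ^ 2 + x ^ 2) ^ 2 : ℝ) : ℂ) = (gfun b x + gfun b (-x)) / 2 := by
  have hp : ((b:ℂ) + x * Complex.I) ≠ 0 := gfun_ne b hb x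
  have hm : ((b:ℂ) + (-x : ℝ) * Complex.I) ≠ 0 := gfun_ne b hb (-x)
  have hfact : ((b:ℂ) ^ 2 + (x:ℂ) ^ 2)
      = ((b:ℂ) + x * Complex.I) * ((b:ℂ) + (-x : ℝ) * Complex.I) := by
    push_cast
    linear_combination (x:ℂ)^2 * Complex.I_sq
  have hden : ((b:ℂ) ^ 2 + (x:ℂ) ^ 2) ≠ 0 := by
    rw [hfact]; exact mul_ne_zero hp hm
  have key : gfun b x + gfun b (-x)
      = 2 * ((b:ℂ) ^ 2 - (x:ℂ) ^ 2) / (((b:ℂ) ^ 2 + (x:ℂ) ^ 2) ^ 2) := by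
    simp only [gfun]
    rw [div_add_div _ _ (pow_ne_zero 2 hp) (pow_ne_zero 2 hm)]
    rw [show ((b:ℂ) + x * Complex.I) ^ 2 * ((b:ℂ) + (-x : ℝ) * Complex.I) ^ 2
        = ((b:ℂ) ^ 2 + (x:ℂ) ^ 2) ^ 2 from by rw [← mul_pow, ← hfact]]
    congr 1
    push_cast
    linear_combination (2 * (x:ℂ) ^ 2) * Complex.I_sq
  rw [key]
  push_cast
  ring

/-- The Fourier transform of `ℓ_b(x) = (b^2-x^2)/(b^2+x^2)^2` (with convention
`f̂(y) = ∫ e^{-2πixy} f(x) dx`) is `2π^2 |y| e^{-2πb|y|}`. -/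
theorem fourier_ell_kernel (b : ℝ) (hb : 0 < b) (y : ℝ) :
    𝓕 (fun x : ℝ => (((b ^ 2 - x ^ 2) / (b ^ 2 + x ^ 2) ^ 2 : ℝ) : ℂ)) y
      = 2 * (π : ℂ) ^ 2 * |y| * Real.exp (-2 * π * b * |y|) := by
  have hg_int : Integrable (gfun b) := integrable_gfun b hb
  have h1 : 𝓕 (hfun b) = gfun b := funext (fourier_hfun b hb)
  have hFg : ∀ z : ℝ, 𝓕 (gfun b) z = hfun b (-z) := by
    intro z
    have h2 := (integrable_hfun b hb).fourierInv_fourier_eq (h1 ▸ hg_int)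
      ((continuous_hfun b).continuousAt (x := -z))
    rw [h1, Real.fourierInv_eq_fourier_neg, neg_neg] at h2
    exact h2
  have hgneg : 𝓕 (fun x : ℝ => gfun b (-x)) y = hfun b y := by
    rw [← Real.fourierInv_eq_fourier_comp_neg,
      Real.fourierInv_eq_fourier_neg, hFg, neg_neg]
  have hbdd : ∀ v : ℝ, ‖Complex.exp (↑(-2 * π * v * y) * Complex.I)‖ ≤ 1 := by
    intro v
    rw [Complex.norm_exp_ofReal_mul_I]
  have hmeas : AEStronglyMeasurable (fun v : ℝ =>
      Complex.exp (↑(-2 * π * v * y) * Complex.I)) volume := by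
    apply Continuous.aestronglyMeasurable
    fun_prop
  have hI1 : Integrable (fun v : ℝ =>
      Complex.exp (↑(-2 * π * v * y) * Complex.I) * gfun b v) :=
    hg_int.bdd_mul hmeas (c := 1) (Filter.Eventually.of_forall hbdd)
  have hI2 : Integrable (fun v : ℝ =>
      Complex.exp (↑(-2 * π * v * y) * Complex.I) * gfun b (-v)) :=
    hg_int.comp_neg.bdd_mul hmeas (c := 1) (Filter.Eventually.of_forall hbdd)
  have key : 𝓕 (fun x : ℝ => (((b ^ 2 - x ^ 2) / (b ^ 2 + x ^ 2) ^ 2 : ℝ) : ℂ)) y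
      = (𝓕 (gfun b) y + 𝓕 (fun x : ℝ => gfun b (-x)) y) / 2 := by
    rw [Real.fourier_real_eq_integral_exp_smul,
        Real.fourier_real_eq_integral_exp_smul,
        Real.fourier_real_eq_integral_exp_smul]
    simp only [smul_eq_mul]
    rw [← integral_add hI1 hI2, ← integral_div]
    apply integral_congr_ae (Filter.Eventually.of_forall _)
    intro v
    rw [ell_eq b hb v]
    ring
  rw [key, hFg, hgneg]
  unfold hfun
  rcases le_total 0 y with h | h
  · rw [max_eq_right (neg_nonpos.mpr h), max_eq_left h, _root_.abs_of_nonneg h]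
    push_cast
    ring_nf
  · rw [max_eq_left (neg_nonneg.mpr h), max_eq_right h, abs_of_nonpos h]
    push_cast
    ring_nf
end

section
/- Let f(α,T) ≥ 0 be continuous in α for each fixed T ≥ 2 and satisfy ∫_0^β f(α,T) dα ≤ C(β+1) for all β > 0, T ≥ 2. Let G be a polynomial positive on [0,∞). If ∫_0^∞ f(α,T) G(α) e^{-bα} dα ~ ∫_0^∞ G(α) e^{-bα} dα as T → ∞ for every fixed b > 0, then for all fixed 0 ≤ c < d, (1/(d-c)) ∫_c^d f(α,T) dα → 1 as T → ∞. -/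
open Real MeasureTheory Filter Topology

set_option maxHeartbeats 1000000

section TauberianAux

open Set

lemma polyBound (G : Polynomial ℝ) {b : ℝ} (hb : 0 < b) :
    ∃ K, 0 < K ∧ ∀ α, 0 ≤ α → |G.eval α| ≤ K * Real.exp (b * α) := by
  set Q := G.comp (Polynomial.C b⁻¹ * Polynomial.X) with hQ
  have hQe : ∀ α : ℝ, Q.eval (b * α) = G.eval α := by
    intro α
    simp [hQ, Polynomial.eval_comp, hb.ne']
  have h1 : Tendsto (fun α : ℝ => b * α) atTop atTop :=
    Tendsto.const_mul_atTop hb tendsto_id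
  have h0 : Tendsto (fun α : ℝ => G.eval α / Real.exp (b * α)) atTop (𝓝 0) := by
    have := (Polynomial.tendsto_div_exp_atTop Q).comp h1
    have he : (fun α : ℝ => G.eval α / Real.exp (b * α))
        = (fun x => Polynomial.eval x Q / rexp x) ∘ fun α => b * α := by
      funext α; simp [Function.comp, hQe]
    rw [he]; exact this
  have h2 : ∀ᶠ α in (atTop : Filter ℝ), |G.eval α / Real.exp (b * α)| ≤ 1 := by
    have := h0.abs
    rw [abs_zero] at this
    exact this.eventually_le_const (by norm_num : (0:ℝ) < 1)
  obtain ⟨N, hN⟩ := eventually_atTop.1 h2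
  have hcomp : IsCompact (Icc (0:ℝ) (max N 0)) := isCompact_Icc
  obtain ⟨K0, hK0⟩ := hcomp.exists_bound_of_continuousOn
    (f := fun α => G.eval α / Real.exp (b * α))
    (Continuous.continuousOn (by
      exact (G.continuous).div (Real.continuous_exp.comp (continuous_const.mul continuous_id)) (fun x => (Real.exp_pos _).ne')))
  refine ⟨max K0 1 + 1, by positivity, fun α hα => ?_⟩
  have hexp : (0:ℝ) < Real.exp (b * α) := Real.exp_pos _
  have key : |G.eval α / Real.exp (b * α)| ≤ max K0 1 + 1 := by
    rcases le_total α (max N 0) with h | h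
    · have := hK0 α ⟨hα, h⟩
      rw [Real.norm_eq_abs] at this
      have : |G.eval α / Real.exp (b * α)| ≤ K0 := this
      calc |G.eval α / Real.exp (b * α)| ≤ K0 := this
        _ ≤ max K0 1 + 1 := by nlinarith [le_max_left K0 1]
    · have := hN α (le_trans (le_max_left N 0) h)
      calc |G.eval α / Real.exp (b * α)| ≤ 1 := this
        _ ≤ max K0 1 + 1 := by nlinarith [le_max_right K0 1]
  rw [abs_div, abs_of_pos hexp, div_le_iff₀ hexp] at key
  linarith

lemma intOn (f : ℝ → ℝ → ℝ) (C : ℝ)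
    (hpos : ∀ T ≥ 2, ∀ α : ℝ, 0 ≤ f α T)
    (hcont : ∀ T ≥ 2, Continuous fun α => f α T)
    (hbd : ∀ β > 0, ∀ T ≥ 2, (∫ α in (0:ℝ)..β, f α T) ≤ C * (β + 1))
    {T : ℝ} (hT : 2 ≤ T) {g : ℝ → ℝ} (hgc : Continuous g)
    {K b : ℝ} (hK : 0 ≤ K) (hb : 0 < b)
    (hg : ∀ α, 0 ≤ α → |g α| ≤ K * Real.exp (-(b * α))) :
    IntegrableOn (fun α => f α T * g α) (Set.Ioi 0) := by
  have hfc : Continuous fun α => f α T := hcont T hT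
  have hfg : Continuous fun α => f α T * g α := hfc.mul hgc
  have hC : 0 ≤ C := by
    have h1 := hbd 1 one_pos T hT
    have h2 : (0:ℝ) ≤ ∫ α in (0:ℝ)..1, f α T :=
      intervalIntegral.integral_nonneg zero_le_one (fun x _ => hpos T hT x)
    linarith
  set r : ℝ := Real.exp (-b) with hr
  have hr1 : r < 1 := Real.exp_lt_one_iff.2 (by linarith)
  have hr0 : 0 ≤ r := (Real.exp_pos _).le
  have hsum : Summable (fun n : ℕ => K * r ^ n * (C * ((n:ℝ) + 2))) := by
    have h1 : Summable (fun n : ℕ => (n:ℝ) * r ^ n) := by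
      simpa using summable_pow_mul_geometric_of_norm_lt_one 1
        (by rwa [Real.norm_eq_abs, abs_of_nonneg hr0])
    have h2 : Summable (fun n : ℕ => r ^ n) :=
      summable_geometric_of_lt_one hr0 hr1
    have : Summable (fun n : ℕ => ((n:ℝ) + 2) * r ^ n) := by
      simpa [add_mul, two_mul] using h1.add (h2.add h2)
    have := this.mul_left (K * C)
    refine this.congr fun n => by ring
  set I : ℝ := ∑' n : ℕ, K * r ^ n * (C * ((n:ℝ) + 2)) with hI
  refine integrableOn_Ioi_of_intervalIntegral_norm_bounded I 0
    (b := fun n : ℕ => (n : ℝ)) (fun i => hfg.integrableOn_Ioc) tendsto_natCast_atTop_atTop ?_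
  refine Eventually.of_forall fun N => ?_
  have hadj : ∀ k < N, IntervalIntegrable (fun x => ‖f x T * g x‖) volume (k : ℝ) ((k:ℝ)+1) :=
    fun k _ => (hfg.norm.intervalIntegrable _ _)
  have hsplit : ∑ k ∈ Finset.range N, ∫ x in (k:ℝ)..((k:ℝ)+1), ‖f x T * g x‖
      = ∫ x in (0:ℝ)..(N:ℝ), ‖f x T * g x‖ := by
    have := intervalIntegral.sum_integral_adjacent_intervals
      (a := fun k : ℕ => (k : ℝ)) (μ := volume) (f := fun x => ‖f x T * g x‖)
      (n := N) (by intro k _; exact_mod_cast (hfg.norm.intervalIntegrable _ _))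
    simpa using this
  rw [← hsplit]
  have hterm : ∀ k : ℕ, (∫ x in (k:ℝ)..((k:ℝ)+1), ‖f x T * g x‖)
      ≤ K * r ^ k * (C * ((k:ℝ) + 2)) := by
    intro k
    have step1 : (∫ x in (k:ℝ)..((k:ℝ)+1), ‖f x T * g x‖)
        ≤ ∫ x in (k:ℝ)..((k:ℝ)+1), f x T * (K * r ^ k) := by
      refine intervalIntegral.integral_mono_on (by linarith)
        (hfg.norm.intervalIntegrable _ _)
        ((hfc.mul continuous_const).intervalIntegrable _ _) (fun x hx => ?_)
      obtain ⟨hx1, hx2⟩ := hx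
      have hx0 : (0:ℝ) ≤ x := le_trans (Nat.cast_nonneg k) hx1
      have hfx : 0 ≤ f x T := hpos T hT x
      have : ‖f x T * g x‖ = f x T * |g x| := by
        rw [norm_mul, Real.norm_eq_abs, Real.norm_eq_abs, abs_of_nonneg hfx]
      rw [this]
      have hgx : |g x| ≤ K * Real.exp (-(b * x)) := hg x hx0
      have hex : Real.exp (-(b * x)) ≤ r ^ k := by
        rw [hr, ← Real.exp_nat_mul]
        apply Real.exp_le_exp.2
        push_cast
        nlinarith
      have : |g x| ≤ K * r ^ k := le_trans hgx (by nlinarith [Real.exp_pos (-(b*x))])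
      nlinarith [abs_nonneg (g x)]
    have step2 : (∫ x in (k:ℝ)..((k:ℝ)+1), f x T * (K * r ^ k))
        = (K * r ^ k) * ∫ x in (k:ℝ)..((k:ℝ)+1), f x T := by
      rw [← intervalIntegral.integral_const_mul]
      congr 1; funext x; ring
    have step3 : (∫ x in (k:ℝ)..((k:ℝ)+1), f x T) ≤ C * ((k:ℝ) + 2) := by
      have hadd : (∫ x in (0:ℝ)..(k:ℝ), f x T) + (∫ x in (k:ℝ)..((k:ℝ)+1), f x T)
          = ∫ x in (0:ℝ)..((k:ℝ)+1), f x T :=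
        intervalIntegral.integral_add_adjacent_intervals
          (hfc.intervalIntegrable _ _) (hfc.intervalIntegrable _ _)
      have h0 : (0:ℝ) ≤ ∫ x in (0:ℝ)..(k:ℝ), f x T :=
        intervalIntegral.integral_nonneg (Nat.cast_nonneg k) (fun x _ => hpos T hT x)
      have hb' := hbd ((k:ℝ)+1) (by positivity) T hT
      linarith
    have hKr : 0 ≤ K * r ^ k := by positivity
    calc (∫ x in (k:ℝ)..((k:ℝ)+1), ‖f x T * g x‖)
        ≤ (K * r ^ k) * ∫ x in (k:ℝ)..((k:ℝ)+1), f x T := by rw [← step2]; exact step1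
      _ ≤ (K * r ^ k) * (C * ((k:ℝ)+2)) := by nlinarith
      _ = K * r ^ k * (C * ((k:ℝ) + 2)) := by ring
  calc ∑ k ∈ Finset.range N, ∫ x in (k:ℝ)..((k:ℝ)+1), ‖f x T * g x‖
      ≤ ∑ k ∈ Finset.range N, K * r ^ k * (C * ((k:ℝ) + 2)) :=
        Finset.sum_le_sum fun k _ => hterm k
    _ ≤ I := Summable.sum_le_tsum _ (fun k _ => by positivity) hsum

-- integrability of a continuous exponentially-bounded function on Ioi 0
lemma intOn' {g : ℝ → ℝ} (hgc : Continuous g) {K b : ℝ} (hb : 0 < b)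
    (hg : ∀ α, 0 ≤ α → |g α| ≤ K * Real.exp (-(b * α))) :
    IntegrableOn g (Set.Ioi 0) := by
  have hexp : IntegrableOn (fun α : ℝ => K * Real.exp (-b * α)) (Set.Ioi 0) :=
    (exp_neg_integrableOn_Ioi 0 hb).const_mul K
  refine Integrable.mono hexp hgc.aestronglyMeasurable ?_
  refine (ae_restrict_iff' measurableSet_Ioi).2 (Eventually.of_forall fun x hx => ?_)
  have := hg x (le_of_lt hx)
  rw [Real.norm_eq_abs, Real.norm_eq_abs]
  calc |g x| ≤ K * Real.exp (-(b * x)) := this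
    _ ≤ |K * Real.exp (-b * x)| := by rw [neg_mul]; exact le_abs_self _
lemma weightBound (G : Polynomial ℝ) {b : ℝ} (hb : 0 < b) :
    ∃ K, 0 < K ∧ ∀ α, 0 ≤ α →
      |G.eval α * Real.exp (-b * α)| ≤ K * Real.exp (-(b/2 * α)) := by
  obtain ⟨K, hK0, hK⟩ := polyBound G (b := b/2) (by linarith)
  refine ⟨K, hK0, fun α hα => ?_⟩
  rw [abs_mul, abs_of_pos (Real.exp_pos _)]
  have h1 := hK α hα
  have h2 : Real.exp (b/2 * α) * Real.exp (-b * α) = Real.exp (-(b/2 * α)) := by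
    rw [← Real.exp_add]; ring_nf
  nlinarith [Real.exp_pos (-b * α), Real.exp_pos (-(b/2*α)), abs_nonneg (G.eval α)]

lemma weightInt (G : Polynomial ℝ) {b : ℝ} (hb : 0 < b) :
    IntegrableOn (fun α => G.eval α * Real.exp (-b * α)) (Set.Ioi 0) := by
  obtain ⟨K, hK0, hK⟩ := weightBound G hb
  exact intOn' (G.continuous.mul (Real.continuous_exp.comp (continuous_const.mul continuous_id)))
    (by linarith : (0:ℝ) < b/2) hK

lemma weightPos (G : Polynomial ℝ) (hG : ∀ α : ℝ, 0 ≤ α → 0 < G.eval α) {b : ℝ} (hb : 0 < b) :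
    0 < ∫ α in Set.Ioi (0:ℝ), G.eval α * Real.exp (-b * α) := by
  have hint := weightInt G hb
  have hnn : 0 ≤ᵐ[volume.restrict (Set.Ioi (0:ℝ))] (fun α => G.eval α * Real.exp (-b * α)) := by
    refine (ae_restrict_iff' measurableSet_Ioi).2 (Eventually.of_forall fun x hx => ?_)
    have := hG x (le_of_lt hx)
    positivity
  rw [setIntegral_pos_iff_support_of_nonneg_ae hnn hint]
  have hsub : Set.Ioi (0:ℝ) ⊆ Function.support (fun α => G.eval α * Real.exp (-b * α)) ∩ Set.Ioi 0 := by
    intro x hx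
    refine ⟨?_, hx⟩
    have := hG x (le_of_lt hx)
    exact ne_of_gt (by positivity)
  calc (0:ENNReal) < volume (Set.Ioi (0:ℝ)) := by simp
    _ ≤ volume (Function.support (fun α => G.eval α * Real.exp (-b * α)) ∩ Set.Ioi 0) :=
      measure_mono hsub

lemma momentTendsto (f : ℝ → ℝ → ℝ)
    (G : Polynomial ℝ) (hG : ∀ α : ℝ, 0 ≤ α → 0 < G.eval α)
    (hA : ∀ b > 0, Tendsto
      (fun T => (∫ α in Set.Ioi (0:ℝ), f α T * G.eval α * Real.exp (-b * α))
        / ∫ α in Set.Ioi (0:ℝ), G.eval α * Real.exp (-b * α)) atTop (𝓝 1))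
    {b : ℝ} (hb : 0 < b) :
    Tendsto (fun T => ∫ α in Set.Ioi (0:ℝ), f α T * (G.eval α * Real.exp (-b * α)))
      atTop (𝓝 (∫ α in Set.Ioi (0:ℝ), G.eval α * Real.exp (-b * α))) := by
  set D := ∫ α in Set.Ioi (0:ℝ), G.eval α * Real.exp (-b * α) with hD
  have hD0 : 0 < D := weightPos G hG hb
  have := (hA b hb).mul_const D
  rw [one_mul] at this
  refine this.congr fun T => ?_
  rw [div_mul_cancel₀ _ hD0.ne']
  congr 1
  funext α
  ring

-- general bound for continuous h composed with exp, times weight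
lemma contWeightBound (G : Polynomial ℝ) (h : ℝ → ℝ) (hc : Continuous h) :
    ∃ K, 0 < K ∧ ∀ α, 0 ≤ α →
      |h (Real.exp (-α)) * (G.eval α * Real.exp (-α))| ≤ K * Real.exp (-(1/2 * α)) := by
  obtain ⟨K2, hK20, hK2⟩ := weightBound G one_pos
  obtain ⟨M, hM⟩ := (isCompact_Icc (a := (0:ℝ)) (b := 1)).exists_bound_of_continuousOn
    hc.continuousOn
  have hM0 : 0 ≤ M := le_trans (norm_nonneg _) (hM 0 (by norm_num))
  refine ⟨(M + 1) * K2, by positivity, fun α hα => ?_⟩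
  have he1 : Real.exp (-α) ∈ Icc (0:ℝ) 1 :=
    ⟨(Real.exp_pos _).le, Real.exp_le_one_iff.2 (by linarith)⟩
  have h1 : |h (Real.exp (-α))| ≤ M := by
    have := hM _ he1; rwa [Real.norm_eq_abs] at this
  have h2 : |G.eval α * Real.exp (-α)| ≤ K2 * Real.exp (-(1/2 * α)) := by
    have := hK2 α hα
    rw [show (-1:ℝ) * α = -α by ring, show (1:ℝ)/2 * α = 1/2*α by ring] at this
    exact this
  rw [abs_mul]
  have hep := Real.exp_pos (-(1/2 * α))
  nlinarith [abs_nonneg (h (Real.exp (-α))), abs_nonneg (G.eval α * Real.exp (-α))]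

lemma polyTendsto (f : ℝ → ℝ → ℝ) (C : ℝ)
    (hpos : ∀ T ≥ 2, ∀ α : ℝ, 0 ≤ f α T)
    (hcont : ∀ T ≥ 2, Continuous fun α => f α T)
    (hbd : ∀ β > 0, ∀ T ≥ 2, (∫ α in (0:ℝ)..β, f α T) ≤ C * (β + 1))
    (G : Polynomial ℝ) (hG : ∀ α : ℝ, 0 ≤ α → 0 < G.eval α)
    (hA : ∀ b > 0, Tendsto
      (fun T => (∫ α in Set.Ioi (0:ℝ), f α T * G.eval α * Real.exp (-b * α))
        / ∫ α in Set.Ioi (0:ℝ), G.eval α * Real.exp (-b * α)) atTop (𝓝 1))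
    (p : Polynomial ℝ) :
    Tendsto (fun T => ∫ α in Set.Ioi (0:ℝ),
        f α T * (p.eval (Real.exp (-α)) * (G.eval α * Real.exp (-α))))
      atTop (𝓝 (∫ α in Set.Ioi (0:ℝ),
        p.eval (Real.exp (-α)) * (G.eval α * Real.exp (-α)))) := by
  have contp : ∀ q : Polynomial ℝ,
      Continuous (fun α => q.eval (Real.exp (-α)) * (G.eval α * Real.exp (-α))) := by
    intro q
    exact ((q.continuous.comp (by continuity)).mul
      (G.continuous.mul (Real.continuous_exp.comp (by continuity))))
  have intf : ∀ (q : Polynomial ℝ) {T : ℝ}, 2 ≤ T → IntegrableOn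
      (fun α => f α T * (q.eval (Real.exp (-α)) * (G.eval α * Real.exp (-α)))) (Set.Ioi 0) := by
    intro q T hT
    obtain ⟨K, hK0, hK⟩ := contWeightBound G (fun u => q.eval u) q.continuous
    exact intOn f C hpos hcont hbd hT (contp q) hK0.le (by norm_num : (0:ℝ) < 1/2) hK
  have intq : ∀ q : Polynomial ℝ, IntegrableOn
      (fun α => q.eval (Real.exp (-α)) * (G.eval α * Real.exp (-α))) (Set.Ioi 0) := by
    intro q
    obtain ⟨K, hK0, hK⟩ := contWeightBound G (fun u => q.eval u) q.continuous
    exact intOn' (contp q) (by norm_num : (0:ℝ) < 1/2) hK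
  induction p using Polynomial.induction_on' with
  | add p q ihp ihq =>
    have heq : ∀ᶠ T in (atTop : Filter ℝ), (∫ α in Set.Ioi (0:ℝ),
        f α T * (p.eval (Real.exp (-α)) * (G.eval α * Real.exp (-α))))
        + (∫ α in Set.Ioi (0:ℝ),
        f α T * (q.eval (Real.exp (-α)) * (G.eval α * Real.exp (-α))))
        = ∫ α in Set.Ioi (0:ℝ),
        f α T * ((p+q).eval (Real.exp (-α)) * (G.eval α * Real.exp (-α))) := by
      filter_upwards [eventually_ge_atTop (2:ℝ)] with T hT
      rw [← integral_add (intf p hT) (intf q hT)]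
      congr 1; funext α; simp [Polynomial.eval_add]; ring
    have hlim : (∫ α in Set.Ioi (0:ℝ), p.eval (Real.exp (-α)) * (G.eval α * Real.exp (-α)))
        + (∫ α in Set.Ioi (0:ℝ), q.eval (Real.exp (-α)) * (G.eval α * Real.exp (-α)))
        = ∫ α in Set.Ioi (0:ℝ), (p+q).eval (Real.exp (-α)) * (G.eval α * Real.exp (-α)) := by
      rw [← integral_add (intq p) (intq q)]
      congr 1; funext α; simp [Polynomial.eval_add]; ring
    rw [← hlim]
    exact (ihp.add ihq).congr' heq
  | monomial n a =>
    have hexp : ∀ α : ℝ, Real.exp (-α) ^ n * Real.exp (-α)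
        = Real.exp (-((n:ℝ)+1) * α) := by
      intro α
      rw [← Real.exp_nat_mul, ← Real.exp_add]
      congr 1; ring
    have hb : (0:ℝ) < (n:ℝ) + 1 := by positivity
    have base := momentTendsto f G hG hA hb
    have := base.const_mul a
    have heq1 : (fun T => a * ∫ α in Set.Ioi (0:ℝ),
        f α T * (G.eval α * Real.exp (-((n:ℝ)+1) * α)))
        = fun T => ∫ α in Set.Ioi (0:ℝ),
        f α T * ((Polynomial.monomial n a).eval (Real.exp (-α)) * (G.eval α * Real.exp (-α))) := by
      funext T
      rw [← integral_const_mul]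
      congr 1; funext α
      rw [Polynomial.eval_monomial, ← hexp α]; ring
    have heq2 : a * (∫ α in Set.Ioi (0:ℝ), G.eval α * Real.exp (-((n:ℝ)+1) * α))
        = ∫ α in Set.Ioi (0:ℝ),
        (Polynomial.monomial n a).eval (Real.exp (-α)) * (G.eval α * Real.exp (-α)) := by
      rw [← integral_const_mul]
      congr 1; funext α
      rw [Polynomial.eval_monomial, ← hexp α]; ring
    rw [← heq2, ← heq1]
    exact this

noncomputable def ramp (lo hi δ α : ℝ) : ℝ :=
  max 0 (min 1 (min ((α - lo)/δ) ((hi - α)/δ)))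

lemma ramp_continuous (lo hi δ : ℝ) : Continuous (ramp lo hi δ) := by
  unfold ramp
  exact continuous_const.max (continuous_const.min
    (((continuous_id.sub continuous_const).div_const δ).min
      ((continuous_const.sub continuous_id).div_const δ)))

lemma ramp_nonneg (lo hi δ α : ℝ) : 0 ≤ ramp lo hi δ α := le_max_left _ _

lemma ramp_le_one (lo hi δ α : ℝ) : ramp lo hi δ α ≤ 1 := by
  unfold ramp
  exact max_le zero_le_one (min_le_left _ _)

lemma ramp_eq_one (lo hi δ : ℝ) (hδ : 0 < δ) {α : ℝ} (h1 : lo + δ ≤ α) (h2 : α ≤ hi - δ) :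
    ramp lo hi δ α = 1 := by
  unfold ramp
  have ha : (1:ℝ) ≤ (α - lo)/δ := (le_div_iff₀ hδ).2 (by linarith)
  have hb : (1:ℝ) ≤ (hi - α)/δ := (le_div_iff₀ hδ).2 (by linarith)
  rw [min_eq_left (le_min ha hb)]
  simp

lemma ramp_eq_zero_left (lo hi δ : ℝ) (hδ : 0 < δ) {α : ℝ} (h : α ≤ lo) :
    ramp lo hi δ α = 0 := by
  unfold ramp
  have ha : (α - lo)/δ ≤ 0 := div_nonpos_of_nonpos_of_nonneg (by linarith) hδ.le
  have : min ((α - lo)/δ) ((hi - α)/δ) ≤ 0 := le_trans (min_le_left _ _) ha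
  rw [max_eq_left (le_trans (min_le_right _ _) this)]

lemma ramp_eq_zero_right (lo hi δ : ℝ) (hδ : 0 < δ) {α : ℝ} (h : hi ≤ α) :
    ramp lo hi δ α = 0 := by
  unfold ramp
  have ha : (hi - α)/δ ≤ 0 := div_nonpos_of_nonpos_of_nonneg (by linarith) hδ.le
  have : min ((α - lo)/δ) ((hi - α)/δ) ≤ 0 := le_trans (min_le_right _ _) ha
  rw [max_eq_left (le_trans (min_le_right _ _) this)]

noncomputable def psi (G : Polynomial ℝ) (lo hi δ u : ℝ) : ℝ :=
  ramp lo hi δ (-Real.log (min (max u (Real.exp (-(hi+1)))) 1))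
    / (G.eval (-Real.log (min (max u (Real.exp (-(hi+1)))) 1))
      * (min (max u (Real.exp (-(hi+1)))) 1))

lemma psi_continuous (G : Polynomial ℝ) (hG : ∀ α : ℝ, 0 ≤ α → 0 < G.eval α)
    (lo hi δ : ℝ) (hhi : 0 ≤ hi) : Continuous (psi G lo hi δ) := by
  have hv : ∀ u : ℝ, 0 < min (max u (Real.exp (-(hi+1)))) 1 := by
    intro u
    exact lt_min (lt_of_lt_of_le (Real.exp_pos _) (le_max_right _ _)) one_pos
  have hlog : ∀ u : ℝ, 0 ≤ -Real.log (min (max u (Real.exp (-(hi+1)))) 1) := by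
    intro u
    have h1 : min (max u (Real.exp (-(hi+1)))) 1 ≤ 1 := min_le_right _ _
    have := Real.log_nonpos (hv u).le h1
    linarith
  have hvc : Continuous fun u : ℝ => min (max u (Real.exp (-(hi+1)))) 1 := by continuity
  have hlogc : Continuous fun u : ℝ => -Real.log (min (max u (Real.exp (-(hi+1)))) 1) := by
    refine (Real.continuousOn_log.comp_continuous hvc fun u => ?_).neg
    exact (hv u).ne'
  unfold psi
  refine Continuous.div ((ramp_continuous lo hi δ).comp hlogc)
    ((G.continuous.comp hlogc).mul hvc) fun u => ?_
  have := hG _ (hlog u)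
  exact ne_of_gt (by positivity)

lemma psi_key (G : Polynomial ℝ) (hG : ∀ α : ℝ, 0 ≤ α → 0 < G.eval α)
    (lo hi δ : ℝ) (hδ : 0 < δ) (hhi : 0 ≤ hi) {α : ℝ} (hα : 0 < α) :
    psi G lo hi δ (Real.exp (-α)) * (G.eval α * Real.exp (-α)) = ramp lo hi δ α := by
  unfold psi
  rcases le_or_gt α (hi + 1) with h | h
  · have h1 : Real.exp (-(hi+1)) ≤ Real.exp (-α) := Real.exp_le_exp.2 (by linarith)
    have h2 : Real.exp (-α) ≤ 1 := Real.exp_le_one_iff.2 (by linarith)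
    rw [max_eq_left h1, min_eq_left h2, Real.log_exp, neg_neg]
    have hGα := hG α hα.le
    have : G.eval α * Real.exp (-α) ≠ 0 := ne_of_gt (by positivity)
    field_simp
  · have h1 : Real.exp (-α) ≤ Real.exp (-(hi+1)) := Real.exp_le_exp.2 (by linarith)
    have h2 : Real.exp (-(hi+1)) ≤ 1 := Real.exp_le_one_iff.2 (by linarith)
    rw [max_eq_right h1, min_eq_left h2, Real.log_exp, neg_neg]
    rw [ramp_eq_zero_right lo hi δ hδ (by linarith : hi ≤ hi + 1),
      ramp_eq_zero_right lo hi δ hδ (by linarith : hi ≤ α)]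
    simp

lemma rampTendsto (f : ℝ → ℝ → ℝ) (C : ℝ)
    (hpos : ∀ T ≥ 2, ∀ α : ℝ, 0 ≤ f α T)
    (hcont : ∀ T ≥ 2, Continuous fun α => f α T)
    (hbd : ∀ β > 0, ∀ T ≥ 2, (∫ α in (0:ℝ)..β, f α T) ≤ C * (β + 1))
    (G : Polynomial ℝ) (hG : ∀ α : ℝ, 0 ≤ α → 0 < G.eval α)
    (hA : ∀ b > 0, Tendsto
      (fun T => (∫ α in Set.Ioi (0:ℝ), f α T * G.eval α * Real.exp (-b * α))
        / ∫ α in Set.Ioi (0:ℝ), G.eval α * Real.exp (-b * α)) atTop (𝓝 1))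
    (lo hi δ : ℝ) (hδ : 0 < δ) (hhi : 0 ≤ hi) :
    Tendsto (fun T => ∫ α in Set.Ioi (0:ℝ), f α T * ramp lo hi δ α)
      atTop (𝓝 (∫ α in Set.Ioi (0:ℝ), ramp lo hi δ α)) := by
  set ψ := psi G lo hi δ with hψ
  have hψc : Continuous ψ := psi_continuous G hG lo hi δ hhi
  -- rewrite ramp as ψ-composed
  have hrw1 : ∀ T : ℝ, (∫ α in Set.Ioi (0:ℝ), f α T * ramp lo hi δ α)
      = ∫ α in Set.Ioi (0:ℝ), f α T * (ψ (Real.exp (-α)) * (G.eval α * Real.exp (-α))) := by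
    intro T
    refine setIntegral_congr_fun measurableSet_Ioi fun α hα => ?_
    rw [psi_key G hG lo hi δ hδ hhi hα]
  have hrw2 : (∫ α in Set.Ioi (0:ℝ), ramp lo hi δ α)
      = ∫ α in Set.Ioi (0:ℝ), ψ (Real.exp (-α)) * (G.eval α * Real.exp (-α)) := by
    refine setIntegral_congr_fun measurableSet_Ioi fun α hα => ?_
    rw [psi_key G hG lo hi δ hδ hhi hα]
  simp only [hrw1, hrw2]
  -- the weight and its integral
  set w : ℝ → ℝ := fun α => G.eval α * Real.exp (-α) with hw
  have hwc : Continuous w := G.continuous.mul (Real.continuous_exp.comp continuous_neg)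
  have hwpos : ∀ α : ℝ, 0 ≤ α → 0 ≤ w α := fun α hα => by
    have := hG α hα; positivity
  set D := ∫ α in Set.Ioi (0:ℝ), G.eval α * Real.exp (-1 * α) with hD
  have hD0 : 0 < D := weightPos G hG one_pos
  have hDw : D = ∫ α in Set.Ioi (0:ℝ), w α := by
    rw [hD]; congr 1; funext α; rw [hw]; norm_num
  -- integrability facts
  have hintcomp : ∀ (h : ℝ → ℝ), Continuous h →
      IntegrableOn (fun α => h (Real.exp (-α)) * w α) (Set.Ioi (0:ℝ)) := by
    intro h hc
    obtain ⟨K, hK0, hK⟩ := contWeightBound G h hc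
    exact intOn' ((hc.comp (Real.continuous_exp.comp continuous_neg)).mul hwc)
      (by norm_num : (0:ℝ) < 1/2) hK
  have hintfcomp : ∀ (h : ℝ → ℝ), Continuous h → ∀ {T : ℝ}, 2 ≤ T →
      IntegrableOn (fun α => f α T * (h (Real.exp (-α)) * w α)) (Set.Ioi (0:ℝ)) := by
    intro h hc T hT
    obtain ⟨K, hK0, hK⟩ := contWeightBound G h hc
    exact intOn f C hpos hcont hbd hT
      ((hc.comp (Real.continuous_exp.comp continuous_neg)).mul hwc)
      hK0.le (by norm_num : (0:ℝ) < 1/2) hK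
  -- epsilon argument
  rw [Metric.tendsto_nhds]
  intro ε hε
  set ε' := ε / (2 * D + 3) with hε'
  have hε'0 : 0 < ε' := by positivity
  obtain ⟨p, hp⟩ := exists_polynomial_near_of_continuousOn 0 1 ψ hψc.continuousOn ε' hε'0
  -- key comparison: for any U with |∫ f w| control, etc.
  have hmom := momentTendsto f G hG hA one_pos
  have hpoly := polyTendsto f C hpos hcont hbd G hG hA p
  have hev1 : ∀ᶠ T in (atTop : Filter ℝ),
      (∫ α in Set.Ioi (0:ℝ), f α T * (G.eval α * Real.exp (-1 * α))) ≤ D + 1 := by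
    have := hmom.eventually (eventually_le_nhds (by linarith : D < D + 1))
    exact this
  have hev2 : ∀ᶠ T in (atTop : Filter ℝ),
      dist (∫ α in Set.Ioi (0:ℝ), f α T * (p.eval (Real.exp (-α)) * w α))
        (∫ α in Set.Ioi (0:ℝ), p.eval (Real.exp (-α)) * w α) < ε' :=
    hpoly.eventually (Metric.ball_mem_nhds _ hε'0) |>.mono (fun T hT => by
      simpa [Metric.mem_ball, hw] using hT)
  filter_upwards [hev1, hev2, eventually_ge_atTop (2:ℝ)] with T hT1 hT2 hT
  -- now the static estimates
  have hfw : (∫ α in Set.Ioi (0:ℝ), f α T * w α) ≤ D + 1 := by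
    refine le_trans (le_of_eq ?_) hT1
    congr 1; funext α; rw [hw]; norm_num
  have hfwnn : 0 ≤ ∫ α in Set.Ioi (0:ℝ), f α T * w α := by
    refine setIntegral_nonneg measurableSet_Ioi fun α hα => ?_
    exact mul_nonneg (hpos T hT α) (hwpos α (le_of_lt hα))
  -- integrability for this T
  have int1 : IntegrableOn (fun α => f α T * (ψ (Real.exp (-α)) * w α)) (Set.Ioi (0:ℝ)) :=
    hintfcomp ψ hψc hT
  have int2 : IntegrableOn (fun α => f α T * (p.eval (Real.exp (-α)) * w α)) (Set.Ioi (0:ℝ)) :=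
    hintfcomp (fun u => p.eval u) p.continuous hT
  have int3 : IntegrableOn (fun α => ψ (Real.exp (-α)) * w α) (Set.Ioi (0:ℝ)) :=
    hintcomp ψ hψc
  have int4 : IntegrableOn (fun α => p.eval (Real.exp (-α)) * w α) (Set.Ioi (0:ℝ)) :=
    hintcomp (fun u => p.eval u) p.continuous
  have intfw : IntegrableOn (fun α => f α T * w α) (Set.Ioi (0:ℝ)) := by
    have := hintfcomp (fun _ => 1) continuous_const hT
    simpa using this
  -- estimate (i)
  have esti : |(∫ α in Set.Ioi (0:ℝ), f α T * (ψ (Real.exp (-α)) * w α))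
      - ∫ α in Set.Ioi (0:ℝ), f α T * (p.eval (Real.exp (-α)) * w α)|
      ≤ ε' * (D + 1) := by
    rw [← integral_sub int1 int2]
    have habs : |∫ α in Set.Ioi (0:ℝ),
        (f α T * (ψ (Real.exp (-α)) * w α) - f α T * (p.eval (Real.exp (-α)) * w α))|
        ≤ ∫ α in Set.Ioi (0:ℝ), ε' * (f α T * w α) := by
      refine le_trans (by
        simpa [Real.norm_eq_abs] using norm_integral_le_integral_norm
          (μ := volume.restrict (Set.Ioi (0:ℝ)))
          (f := fun α => f α T * (ψ (Real.exp (-α)) * w α)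
            - f α T * (p.eval (Real.exp (-α)) * w α))) ?_
      refine setIntegral_mono_on (int1.sub int2).abs (intfw.const_mul ε')
        measurableSet_Ioi fun α hα => ?_
      have hα0 : (0:ℝ) ≤ α := le_of_lt hα
      have h1 : f α T * (ψ (Real.exp (-α)) * w α) - f α T * (p.eval (Real.exp (-α)) * w α)
          = f α T * w α * (ψ (Real.exp (-α)) - p.eval (Real.exp (-α))) := by ring
      rw [h1, abs_mul]
      have h2 : |ψ (Real.exp (-α)) - p.eval (Real.exp (-α))| ≤ ε' := by
        have := hp (Real.exp (-α)) ⟨(Real.exp_pos _).le, Real.exp_le_one_iff.2 (by linarith)⟩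
        rw [abs_sub_comm]
        linarith
      have h3 : |f α T * w α| = f α T * w α :=
        abs_of_nonneg (mul_nonneg (hpos T hT α) (hwpos α hα0))
      rw [h3]
      nlinarith [mul_nonneg (hpos T hT α) (hwpos α hα0)]
    calc _ ≤ ∫ α in Set.Ioi (0:ℝ), ε' * (f α T * w α) := habs
      _ = ε' * ∫ α in Set.Ioi (0:ℝ), f α T * w α := integral_const_mul _ _
      _ ≤ ε' * (D + 1) := by nlinarith
  -- estimate (ii)
  have estii : |(∫ α in Set.Ioi (0:ℝ), ψ (Real.exp (-α)) * w α)
      - ∫ α in Set.Ioi (0:ℝ), p.eval (Real.exp (-α)) * w α| ≤ ε' * D := by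
    rw [← integral_sub int3 int4]
    have habs : |∫ α in Set.Ioi (0:ℝ),
        (ψ (Real.exp (-α)) * w α - p.eval (Real.exp (-α)) * w α)|
        ≤ ∫ α in Set.Ioi (0:ℝ), ε' * w α := by
      refine le_trans (by
        simpa [Real.norm_eq_abs] using norm_integral_le_integral_norm
          (μ := volume.restrict (Set.Ioi (0:ℝ)))
          (f := fun α => ψ (Real.exp (-α)) * w α
            - p.eval (Real.exp (-α)) * w α)) ?_
      have intw : IntegrableOn w (Set.Ioi (0:ℝ)) := by
        have := hintcomp (fun _ => 1) continuous_const
        simpa using this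
      refine setIntegral_mono_on (int3.sub int4).abs (intw.const_mul ε')
        measurableSet_Ioi fun α hα => ?_
      have hα0 : (0:ℝ) ≤ α := le_of_lt hα
      have h1 : ψ (Real.exp (-α)) * w α - p.eval (Real.exp (-α)) * w α
          = w α * (ψ (Real.exp (-α)) - p.eval (Real.exp (-α))) := by ring
      rw [h1, abs_mul, abs_of_nonneg (hwpos α hα0)]
      have h2 : |ψ (Real.exp (-α)) - p.eval (Real.exp (-α))| ≤ ε' := by
        have := hp (Real.exp (-α)) ⟨(Real.exp_pos _).le, Real.exp_le_one_iff.2 (by linarith)⟩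
        rw [abs_sub_comm]
        linarith
      nlinarith [hwpos α hα0]
    calc _ ≤ ∫ α in Set.Ioi (0:ℝ), ε' * w α := habs
      _ = ε' * ∫ α in Set.Ioi (0:ℝ), w α := integral_const_mul _ _
      _ = ε' * D := by rw [← hDw]
  -- estimate (iii) from hT2
  have estiii : |(∫ α in Set.Ioi (0:ℝ), f α T * (p.eval (Real.exp (-α)) * w α))
      - ∫ α in Set.Ioi (0:ℝ), p.eval (Real.exp (-α)) * w α| < ε' := by
    rw [← Real.dist_eq]; exact hT2
  rw [Real.dist_eq]
  have hAeq : (∫ α in Set.Ioi (0:ℝ), f α T * (ψ (Real.exp (-α)) * (G.eval α * Real.exp (-α))))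
      = ∫ α in Set.Ioi (0:ℝ), f α T * (ψ (Real.exp (-α)) * w α) := rfl
  have hFeq : (∫ α in Set.Ioi (0:ℝ), ψ (Real.exp (-α)) * (G.eval α * Real.exp (-α)))
      = ∫ α in Set.Ioi (0:ℝ), ψ (Real.exp (-α)) * w α := rfl
  rw [hAeq, hFeq]
  have hmain : |(∫ α in Set.Ioi (0:ℝ), f α T * (ψ (Real.exp (-α)) * w α))
      - ∫ α in Set.Ioi (0:ℝ), ψ (Real.exp (-α)) * w α|
      ≤ ε' * (D + 1) + ε' + ε' * D := by
    set A := ∫ α in Set.Ioi (0:ℝ), f α T * (ψ (Real.exp (-α)) * w α)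
    set B := ∫ α in Set.Ioi (0:ℝ), f α T * (p.eval (Real.exp (-α)) * w α)
    set E := ∫ α in Set.Ioi (0:ℝ), p.eval (Real.exp (-α)) * w α
    set F := ∫ α in Set.Ioi (0:ℝ), ψ (Real.exp (-α)) * w α
    have t1 : |A - F| ≤ |A - B| + |B - E| + |E - F| := by
      calc |A - F| = |(A - B) + (B - E) + (E - F)| := by ring_nf
        _ ≤ _ := by
          refine le_trans (abs_add_le _ _) ?_
          gcongr
          exact abs_add_le _ _
    rw [abs_sub_comm E F] at t1
    linarith [esti, estii, le_of_lt estiii, t1]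
  refine lt_of_le_of_lt hmain ?_
  have : ε' * (D + 1) + ε' + ε' * D = ε' * (2 * D + 2) := by ring
  rw [this, hε']
  rw [div_mul_eq_mul_div, div_lt_iff₀ (by linarith : (0:ℝ) < 2 * D + 3)]
  nlinarith

lemma ramp_exp_bound (lo hi δ : ℝ) (hδ : 0 < δ) :
    ∀ α, 0 ≤ α → |ramp lo hi δ α| ≤ Real.exp hi * Real.exp (-(1 * α)) := by
  intro α hα
  rw [abs_of_nonneg (ramp_nonneg lo hi δ α)]
  rcases le_or_gt α hi with h | h
  · calc ramp lo hi δ α ≤ 1 := ramp_le_one _ _ _ _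
      _ ≤ Real.exp (hi - α) := Real.one_le_exp (by linarith)
      _ = Real.exp hi * Real.exp (-(1*α)) := by rw [← Real.exp_add]; congr 1; ring
  · rw [ramp_eq_zero_right lo hi δ hδ h.le]
    positivity

lemma rampIntOn (lo hi δ : ℝ) (hδ : 0 < δ) : IntegrableOn (ramp lo hi δ) (Set.Ioi 0) :=
  intOn' (ramp_continuous lo hi δ) one_pos (ramp_exp_bound lo hi δ hδ)

end TauberianAux

open Set in
/-- Tauberian lemma (forward direction): if
`∫_0^∞ f(α,T) G(α) e^{-bα} dα ~ ∫_0^∞ G(α) e^{-bα} dα` for every fixed `b > 0`,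
then `(1/(d-c)) ∫_c^d f(α,T) dα → 1` for all fixed `0 ≤ c < d`. -/
theorem tauberian_forward (f : ℝ → ℝ → ℝ) (C : ℝ)
    (hpos : ∀ T ≥ 2, ∀ α : ℝ, 0 ≤ f α T)
    (hcont : ∀ T ≥ 2, Continuous fun α => f α T)
    (hbd : ∀ β > 0, ∀ T ≥ 2, (∫ α in (0:ℝ)..β, f α T) ≤ C * (β + 1))
    (G : Polynomial ℝ) (hG : ∀ α : ℝ, 0 ≤ α → 0 < G.eval α)
    (hA : ∀ b > 0, Tendsto
      (fun T => (∫ α in Set.Ioi (0:ℝ), f α T * G.eval α * Real.exp (-b * α))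
        / ∫ α in Set.Ioi (0:ℝ), G.eval α * Real.exp (-b * α)) atTop (𝓝 1)) :
    ∀ c d : ℝ, 0 ≤ c → c < d →
      Tendsto (fun T => (1 / (d - c)) * ∫ α in c..d, f α T) atTop (𝓝 1) := by
  intro c d hc hcd
  have hdc : 0 < d - c := by linarith
  suffices h : Tendsto (fun T => ∫ α in c..d, f α T) atTop (𝓝 (d - c)) by
    have := h.const_mul (1 / (d - c))
    rw [show (1 / (d - c)) * (d - c) = 1 by field_simp] at this
    exact this
  rw [Metric.tendsto_nhds]
  intro ε hε
  set δ := min (ε/8) ((d-c)/4) with hδdef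
  have hδ0 : 0 < δ := lt_min (by linarith) (by linarith)
  have hδε : δ ≤ ε/8 := min_le_left _ _
  have hδdc : δ ≤ (d-c)/4 := min_le_right _ _
  -- upper and lower ramps
  have hup := rampTendsto f C hpos hcont hbd G hG hA (c-δ) (d+δ) δ hδ0 (by linarith)
  have hlo := rampTendsto f C hpos hcont hbd G hG hA c d δ hδ0 (by linarith)
  have hevup : ∀ᶠ T in (atTop : Filter ℝ),
      (∫ α in Set.Ioi (0:ℝ), f α T * ramp (c-δ) (d+δ) δ α)
        < (∫ α in Set.Ioi (0:ℝ), ramp (c-δ) (d+δ) δ α) + δ := by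
    filter_upwards [hup.eventually (Metric.ball_mem_nhds _ hδ0)] with T hT
    rw [Real.dist_eq] at hT
    have := abs_lt.1 hT
    linarith [this.2]
  have hevlo : ∀ᶠ T in (atTop : Filter ℝ),
      (∫ α in Set.Ioi (0:ℝ), ramp c d δ α) - δ
        < ∫ α in Set.Ioi (0:ℝ), f α T * ramp c d δ α := by
    filter_upwards [hlo.eventually (Metric.ball_mem_nhds _ hδ0)] with T hT
    rw [Real.dist_eq] at hT
    have := abs_lt.1 hT
    linarith [this.1]
  -- static integral bounds on the ramps
  have hrampup : (∫ α in Set.Ioi (0:ℝ), ramp (c-δ) (d+δ) δ α) ≤ d - c + 2*δ := by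
    have h1 : ∀ α : ℝ, ramp (c-δ) (d+δ) δ α
        ≤ (Icc (c-δ) (d+δ)).indicator (fun _ => (1:ℝ)) α := by
      intro α
      by_cases hm : α ∈ Icc (c-δ) (d+δ)
      · rw [indicator_of_mem hm]; exact ramp_le_one _ _ _ _
      · rw [indicator_of_notMem hm]
        rw [mem_Icc, not_and_or] at hm
        rcases hm with hm | hm
        · rw [ramp_eq_zero_left _ _ _ hδ0 (by push_neg at hm; linarith)]
        · rw [ramp_eq_zero_right _ _ _ hδ0 (by push_neg at hm; linarith)]
    have hind : Integrable ((Icc (c-δ) (d+δ)).indicator (fun _ => (1:ℝ))) := by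
      rw [integrable_indicator_iff measurableSet_Icc]
      exact integrableOn_const (by rw [Real.volume_Icc]; exact ENNReal.ofReal_ne_top)
    calc (∫ α in Set.Ioi (0:ℝ), ramp (c-δ) (d+δ) δ α)
        ≤ ∫ α in Set.Ioi (0:ℝ), (Icc (c-δ) (d+δ)).indicator (fun _ => (1:ℝ)) α :=
          setIntegral_mono_on (rampIntOn _ _ _ hδ0) hind.integrableOn
            measurableSet_Ioi (fun α _ => h1 α)
      _ ≤ ∫ α, (Icc (c-δ) (d+δ)).indicator (fun _ => (1:ℝ)) α :=
          setIntegral_le_integral hind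
            (Eventually.of_forall fun α => indicator_nonneg (fun _ _ => zero_le_one) α)
      _ = d - c + 2*δ := by
          rw [integral_indicator_const _ measurableSet_Icc, Real.volume_real_Icc_of_le (by linarith), smul_eq_mul,
            mul_one]
          ring
  have hramplo : d - c - 2*δ ≤ ∫ α in Set.Ioi (0:ℝ), ramp c d δ α := by
    have hsub : Icc (c+δ) (d-δ) ⊆ Set.Ioi (0:ℝ) := fun x hx => by
      rw [mem_Ioi]; have := hx.1; linarith
    have h2 : (∫ α in Icc (c+δ) (d-δ), ramp c d δ α)
        ≤ ∫ α in Set.Ioi (0:ℝ), ramp c d δ α := by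
      refine setIntegral_mono_set (rampIntOn _ _ _ hδ0) ?_ (HasSubset.Subset.eventuallyLE hsub)
      exact (ae_restrict_iff' measurableSet_Ioi).2
        (Eventually.of_forall fun α _ => ramp_nonneg _ _ _ _)
    have h3 : (∫ α in Icc (c+δ) (d-δ), ramp c d δ α) = d - c - 2*δ := by
      rw [setIntegral_congr_fun measurableSet_Icc
        (g := fun _ => (1:ℝ)) (fun α hα => ramp_eq_one c d δ hδ0 hα.1 hα.2)]
      rw [setIntegral_const, Real.volume_real_Icc_of_le (by linarith), smul_eq_mul, mul_one]
      ring
    linarith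
  -- sandwiching the interval integral
  filter_upwards [hevup, hevlo, eventually_ge_atTop (2:ℝ)] with T hT1 hT2 hT
  have hfc : Continuous fun α => f α T := hcont T hT
  have hIoc : (∫ α in c..d, f α T) = ∫ α in Ioc c d, f α T :=
    intervalIntegral.integral_of_le hcd.le
  -- upper bound
  have hub : (∫ α in c..d, f α T) ≤ ∫ α in Set.Ioi (0:ℝ), f α T * ramp (c-δ) (d+δ) δ α := by
    rw [hIoc]
    have he : (∫ α in Ioc c d, f α T) = ∫ α in Ioc c d, f α T * ramp (c-δ) (d+δ) δ α := by
      refine setIntegral_congr_fun measurableSet_Ioc fun α hα => ?_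
      rw [ramp_eq_one _ _ _ hδ0 (by linarith [hα.1]) (by linarith [hα.2])]
      ring
    rw [he]
    refine setIntegral_mono_set
      (intOn f C hpos hcont hbd hT (ramp_continuous _ _ _)
        (Real.exp_pos (d+δ)).le one_pos (ramp_exp_bound _ _ _ hδ0)) ?_ ?_
    · exact (ae_restrict_iff' measurableSet_Ioi).2 (Eventually.of_forall fun α _ =>
        mul_nonneg (hpos T hT α) (ramp_nonneg _ _ _ _))
    · refine HasSubset.Subset.eventuallyLE fun x hx => ?_
      rw [mem_Ioi]; exact lt_of_le_of_lt hc hx.1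
  -- lower bound
  have hlb : (∫ α in Set.Ioi (0:ℝ), f α T * ramp c d δ α) ≤ ∫ α in c..d, f α T := by
    rw [hIoc]
    have h1 : ∀ α : ℝ, f α T * ramp c d δ α
        ≤ (Ioc c d).indicator (fun β => f β T) α := by
      intro α
      by_cases hm : α ∈ Ioc c d
      · rw [indicator_of_mem hm]
        nlinarith [ramp_le_one c d δ α, ramp_nonneg c d δ α, hpos T hT α]
      · rw [indicator_of_notMem hm]
        rw [mem_Ioc, not_and_or] at hm
        rcases hm with hm | hm
        · push_neg at hm
          rw [ramp_eq_zero_left _ _ _ hδ0 hm]; simp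
        · push_neg at hm
          rw [ramp_eq_zero_right _ _ _ hδ0 hm.le]; simp
    have hind : Integrable ((Ioc c d).indicator (fun β => f β T)) := by
      rw [integrable_indicator_iff measurableSet_Ioc]
      exact hfc.integrableOn_Ioc
    calc (∫ α in Set.Ioi (0:ℝ), f α T * ramp c d δ α)
        ≤ ∫ α in Set.Ioi (0:ℝ), (Ioc c d).indicator (fun β => f β T) α :=
          setIntegral_mono_on
            (intOn f C hpos hcont hbd hT (ramp_continuous _ _ _)
              (Real.exp_pos d).le one_pos (ramp_exp_bound _ _ _ hδ0))
            hind.integrableOn measurableSet_Ioi (fun α _ => h1 α)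
      _ ≤ ∫ α, (Ioc c d).indicator (fun β => f β T) α :=
          setIntegral_le_integral hind
            (Eventually.of_forall fun α => indicator_nonneg (fun β _ => hpos T hT β) α)
      _ = ∫ α in Ioc c d, f α T := integral_indicator measurableSet_Ioc
  rw [Real.dist_eq, abs_lt]
  constructor
  · have := lt_of_lt_of_le hT2 hlb
    linarith
  · have := lt_of_le_of_lt hub hT1
    linarith
end

section
/- Let f(α,T) ≥ 0 be continuous in α for each fixed T ≥ 2 and satisfy ∫_0^β f(α,T) dα ≤ C(β+1) for all β > 0, T ≥ 2. Let G be a polynomial positive on [0,∞). If for every fixed 0 ≤ c < d, (1/(d-c)) ∫_c^d f(α,T) dα → 1 as T → ∞, then for every fixed b > 0, ∫_0^∞ f(α,T) G(α) e^{-bα} dα ~ ∫_0^∞ G(α) e^{-bα} dα as T → ∞. -/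
open Real MeasureTheory Filter Topology

lemma polyExp_tendsto (P : Polynomial ℝ) {b : ℝ} (hb : 0 < b) :
    Tendsto (fun x => P.eval x * Real.exp (-b * x)) atTop (𝓝 0) := by
  induction P using Polynomial.induction_on' with
  | monomial n c =>
      have h := tendsto_rpow_mul_exp_neg_mul_atTop_nhds_zero (n : ℝ) b hb
      have h2 : Tendsto (fun x : ℝ => c * (x ^ n * Real.exp (-b * x))) atTop (𝓝 (c * 0)) := by
        refine Tendsto.const_mul c (h.congr' ?_)
        filter_upwards [eventually_gt_atTop (0:ℝ)] with x hx
        rw [Real.rpow_natCast]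
      simpa [Polynomial.eval_monomial, mul_assoc] using h2
  | add p q hp hq =>
      simpa [add_mul] using hp.add hq

lemma polyExp_integrableOn (P : Polynomial ℝ) {b : ℝ} (hb : 0 < b) :
    IntegrableOn (fun x => P.eval x * Real.exp (-b * x)) (Set.Ioi 0) := by
  induction P using Polynomial.induction_on' with
  | monomial n c =>
      have h : IntegrableOn (fun x : ℝ => x ^ (n:ℝ) * Real.exp (-b * x ^ (1:ℝ))) (Set.Ioi 0) :=
        integrableOn_rpow_mul_exp_neg_mul_rpow
          (by exact_mod_cast neg_one_lt_zero.trans_le (Nat.cast_nonneg n)) one_pos hb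
      have h2 : IntegrableOn (fun x : ℝ => c * (x ^ n * Real.exp (-b * x))) (Set.Ioi 0) := by
        refine ((h.congr_fun (fun x hx => ?_) measurableSet_Ioi)).const_mul c
        rw [Real.rpow_natCast, Real.rpow_one]
      simpa [Polynomial.eval_monomial, mul_assoc] using h2
  | add p q hp hq =>
      have hpq := hp.add hq
      simp only [Pi.add_def] at hpq
      simpa [add_mul] using hpq

lemma tauberian_key (G : Polynomial ℝ) {b : ℝ} (hb : 0 < b)
    (hGnn : ∀ α : ℝ, 0 ≤ α → 0 ≤ G.eval α)
    (φ : ℝ → ℝ) (hφc : Continuous φ) (hφ0 : ∀ x, 0 ≤ φ x) {C : ℝ}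
    (hC : ∀ A : ℝ, 0 < A → (∫ t in (0:ℝ)..A, φ t) ≤ C * (A + 1)) :
    (∫ α in Set.Ioi (0:ℝ), φ α * (G.eval α * Real.exp (-b * α)))
      = ∫ β in Set.Ioi (0:ℝ), (∫ t in (0:ℝ)..β, φ t) *
          ((b * G.eval β - (Polynomial.derivative G).eval β) * Real.exp (-b * β)) := by
  set g : ℝ → ℝ := fun α => G.eval α * Real.exp (-b * α) with hgdef
  set dg : ℝ → ℝ := fun α =>
    ((Polynomial.derivative G).eval α - b * G.eval α) * Real.exp (-b * α) with hdgdef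
  set F : ℝ → ℝ := fun A => ∫ t in (0:ℝ)..A, φ t with hFdef
  have hgc : Continuous g := G.continuous.mul (Real.continuous_exp.comp
    (continuous_const.mul continuous_id))
  have hdgc : Continuous dg :=
    ((Polynomial.derivative G).continuous.sub (continuous_const.mul G.continuous)).mul
      (Real.continuous_exp.comp (continuous_const.mul continuous_id))
  have hgd : ∀ x, HasDerivAt g (dg x) x := by
    intro x
    have h1 : HasDerivAt (fun y => G.eval y) ((Polynomial.derivative G).eval x) x :=
      G.hasDerivAt x
    have h2 : HasDerivAt (fun y => Real.exp (-b * y)) (Real.exp (-b * x) * (-b)) x := by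
      simpa using ((hasDerivAt_id x).const_mul (-b)).exp
    have h3 : HasDerivAt g _ x := h1.mul h2
    convert h3 using 1
    show ((Polynomial.derivative G).eval x - b * G.eval x) * Real.exp (-b * x) = _; ring
  have hFd : ∀ x, HasDerivAt F (φ x) x := fun x =>
    intervalIntegral.integral_hasDerivAt_right (hφc.intervalIntegrable _ _)
      (hφc.stronglyMeasurableAtFilter _ _) hφc.continuousAt
  have hFc : Continuous F := by
    rw [continuous_iff_continuousAt]; exact fun x => (hFd x).continuousAt
  have hF0 : ∀ A : ℝ, 0 ≤ A → 0 ≤ F A := fun A hA =>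
    intervalIntegral.integral_nonneg hA fun x _ => hφ0 x
  have hgnn : ∀ A : ℝ, 0 ≤ A → 0 ≤ g A := fun A hA =>
    mul_nonneg (hGnn A hA) (Real.exp_pos _).le
  -- integration by parts on [0, A]
  have IBP : ∀ A : ℝ, (∫ t in (0:ℝ)..A, φ t * g t)
      = F A * g A - ∫ t in (0:ℝ)..A, F t * dg t := by
    intro A
    have h := intervalIntegral.integral_deriv_mul_eq_sub (a := (0:ℝ)) (b := A) (u := F) (v := g) (u' := φ) (v' := dg)
      (fun x _ => hFd x) (fun x _ => hgd x) (hφc.intervalIntegrable _ _)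
      (hdgc.intervalIntegrable _ _)
    have hsplit : (∫ x in (0:ℝ)..A, (φ x * g x + F x * dg x))
        = (∫ x in (0:ℝ)..A, φ x * g x) + ∫ x in (0:ℝ)..A, F x * dg x :=
      intervalIntegral.integral_add ((hφc.mul hgc).intervalIntegrable _ _)
        ((hFc.mul hdgc).intervalIntegrable _ _)
    have hF00 : F 0 = 0 := intervalIntegral.integral_same
    rw [hsplit, hF00] at h
    linarith
  -- integrability of F * dg on Ioi 0
  have hFdgint : IntegrableOn (fun β => F β * dg β) (Set.Ioi 0) := by
    set Q : Polynomial ℝ := Polynomial.C C * (Polynomial.X + 1) *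
      (Polynomial.derivative G - Polynomial.C b * G) with hQdef
    have hQ : ∀ β : ℝ, Q.eval β * Real.exp (-b * β) = (C * (β + 1)) * dg β := by
      intro β; simp [Q, hdgdef]; ring
    refine Integrable.mono' ((polyExp_integrableOn Q hb).norm)
      ((hFc.mul hdgc).aestronglyMeasurable) ?_
    refine (ae_restrict_iff' measurableSet_Ioi).2 (Eventually.of_forall fun β hβ => ?_)
    have hβ0 : (0:ℝ) < β := hβ
    have h1 : ‖F β * dg β‖ = F β * |dg β| := by
      rw [Real.norm_eq_abs, abs_mul, abs_of_nonneg (hF0 β hβ0.le)]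
    have h2 : F β * |dg β| ≤ (C * (β + 1)) * |dg β| :=
      mul_le_mul_of_nonneg_right (hC β hβ0) (abs_nonneg _)
    have hCnn : 0 ≤ C * (β + 1) := le_trans (hF0 β hβ0.le) (hC β hβ0)
    rw [h1]
    calc F β * |dg β| ≤ (C * (β + 1)) * |dg β| := h2
      _ = |(C * (β + 1)) * dg β| := by rw [abs_mul (C * (β + 1)) (dg β), abs_of_nonneg hCnn]
      _ = ‖Q.eval β * Real.exp (-b * β)‖ := by rw [hQ β, Real.norm_eq_abs]
  -- F A * g A → 0
  have hFgA_lim : Tendsto (fun A => F A * g A) atTop (𝓝 0) := by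
    set R : Polynomial ℝ := Polynomial.C C * (Polynomial.X + 1) * G with hRdef
    have hR : Tendsto (fun A => C * (A + 1) * g A) atTop (𝓝 0) := by
      refine (polyExp_tendsto R hb).congr fun A => ?_
      simp [R, hgdef]; ring
    refine squeeze_zero' ?_ ?_ hR
    · filter_upwards [eventually_ge_atTop (0:ℝ)] with A hA
      exact mul_nonneg (hF0 A hA) (hgnn A hA)
    · filter_upwards [eventually_gt_atTop (0:ℝ)] with A hA
      exact mul_le_mul_of_nonneg_right (hC A hA) (hgnn A hA.le)
  have hIoiFdg_lim : Tendsto (fun A => ∫ t in (0:ℝ)..A, F t * dg t) atTop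
      (𝓝 (∫ β in Set.Ioi (0:ℝ), F β * dg β)) :=
    intervalIntegral_tendsto_integral_Ioi 0 hFdgint tendsto_id
  have hlim : Tendsto (fun A => ∫ t in (0:ℝ)..A, φ t * g t) atTop
      (𝓝 (0 - ∫ β in Set.Ioi (0:ℝ), F β * dg β)) :=
    (hFgA_lim.sub hIoiFdg_lim).congr fun A => (IBP A).symm
  have hφgint : IntegrableOn (fun α => φ α * g α) (Set.Ioi 0) := by
    refine integrableOn_Ioi_of_intervalIntegral_norm_tendsto
      (0 - ∫ β in Set.Ioi (0:ℝ), F β * dg β) 0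
      (fun i : ℝ => ((hφc.mul hgc).integrableOn_Ioc)) tendsto_id (hlim.congr' ?_)
    filter_upwards [eventually_ge_atTop (0:ℝ)] with A hA
    refine intervalIntegral.integral_congr fun x hx => ?_
    rw [Set.uIcc_of_le hA] at hx
    exact (Real.norm_of_nonneg (mul_nonneg (hφ0 x) (hgnn x hx.1))).symm
  have hfinal : (∫ α in Set.Ioi (0:ℝ), φ α * g α)
      = 0 - ∫ β in Set.Ioi (0:ℝ), F β * dg β :=
    tendsto_nhds_unique (intervalIntegral_tendsto_integral_Ioi 0 hφgint tendsto_id) hlim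
  rw [hfinal, zero_sub, ← integral_neg]
  congr 1
  funext β
  simp [hdgdef]; ring

/-- Tauberian lemma (converse direction): if `(1/(d-c)) ∫_c^d f(α,T) dα → 1` for all
fixed `0 ≤ c < d`, then `∫_0^∞ f(α,T) G(α) e^{-bα} dα ~ ∫_0^∞ G(α) e^{-bα} dα`
for every fixed `b > 0`. -/
theorem tauberian_converse (f : ℝ → ℝ → ℝ) (C : ℝ)
    (hpos : ∀ T ≥ 2, ∀ α : ℝ, 0 ≤ f α T)
    (hcont : ∀ T ≥ 2, Continuous fun α => f α T)
    (hbd : ∀ β > 0, ∀ T ≥ 2, (∫ α in (0:ℝ)..β, f α T) ≤ C * (β + 1))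
    (G : Polynomial ℝ) (hG : ∀ α : ℝ, 0 ≤ α → 0 < G.eval α)
    (hB : ∀ c d : ℝ, 0 ≤ c → c < d →
      Tendsto (fun T => (1 / (d - c)) * ∫ α in c..d, f α T) atTop (𝓝 1)) :
    ∀ b > 0, Tendsto
      (fun T => (∫ α in Set.Ioi (0:ℝ), f α T * G.eval α * Real.exp (-b * α))
        / ∫ α in Set.Ioi (0:ℝ), G.eval α * Real.exp (-b * α)) atTop (𝓝 1) := by
  intro b hb
  have hGnn : ∀ α : ℝ, 0 ≤ α → 0 ≤ G.eval α := fun α hα => (hG α hα).le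
  have hC0 : 0 ≤ C := by
    have h1 := hbd 1 one_pos 2 le_rfl
    have h2 : 0 ≤ ∫ α in (0:ℝ)..1, f α 2 :=
      intervalIntegral.integral_nonneg zero_le_one fun x _ => hpos 2 le_rfl x
    linarith
  set h : ℝ → ℝ := fun β =>
    (b * G.eval β - (Polynomial.derivative G).eval β) * Real.exp (-b * β) with hhdef
  have hhc : Continuous h :=
    ((continuous_const.mul G.continuous).sub (Polynomial.derivative G).continuous).mul
      (Real.continuous_exp.comp (continuous_const.mul continuous_id))
  set D : ℝ := ∫ α in Set.Ioi (0:ℝ), G.eval α * Real.exp (-b * α) with hDdef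
  -- D rewritten via the key lemma with φ = 1
  have key2 : D = ∫ β in Set.Ioi (0:ℝ), β * h β := by
    have h1 := tauberian_key G hb hGnn (fun _ => (1:ℝ)) continuous_const
      (fun _ => zero_le_one) (C := 1) (fun A hA => by
        rw [intervalIntegral.integral_const]
        simp only [sub_zero, smul_eq_mul, mul_one, one_mul]
        linarith)
    simp only [one_mul] at h1
    rw [hDdef, hhdef]
    simp only [intervalIntegral.integral_const, sub_zero, smul_eq_mul, mul_one] at h1
    exact h1
  -- positivity of D
  have hgc : Continuous fun α : ℝ => G.eval α * Real.exp (-b * α) :=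
    G.continuous.mul (Real.continuous_exp.comp (continuous_const.mul continuous_id))
  have hIg : IntegrableOn (fun α => G.eval α * Real.exp (-b * α)) (Set.Ioi 0) :=
    polyExp_integrableOn G hb
  have hDpos : 0 < D := by
    have hpos1 : 0 < ∫ α in (0:ℝ)..1, G.eval α * Real.exp (-b * α) :=
      intervalIntegral.intervalIntegral_pos_of_pos_on (hgc.intervalIntegrable 0 1)
        (fun x hx => mul_pos (hG x hx.1.le) (Real.exp_pos _)) one_pos
    rw [intervalIntegral.integral_of_le zero_le_one] at hpos1
    have hsub : (∫ α in Set.Ioc (0:ℝ) 1, G.eval α * Real.exp (-b * α)) ≤ D := by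
      refine setIntegral_mono_set hIg ?_ Set.Ioc_subset_Ioi_self.eventuallyLE
      exact (ae_restrict_iff' measurableSet_Ioi).2 (Eventually.of_forall fun x hx =>
        mul_nonneg (hGnn x (le_of_lt hx)) (Real.exp_pos _).le)
    linarith
  -- numerator identity via the key lemma
  have key1 : ∀ T, 2 ≤ T → (∫ α in Set.Ioi (0:ℝ), f α T * G.eval α * Real.exp (-b * α))
      = ∫ β in Set.Ioi (0:ℝ), (∫ t in (0:ℝ)..β, f t T) * h β := by
    intro T hT
    have h1 := tauberian_key G hb hGnn (fun α => f α T) (hcont T hT)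
      (fun x => hpos T hT x) (C := C) (fun A hA => hbd A hA T hT)
    rw [hhdef]
    simp only [mul_assoc]
    exact h1
  -- continuity of primitives
  have hFcT : ∀ T, 2 ≤ T → Continuous fun β => ∫ t in (0:ℝ)..β, f t T := by
    intro T hT
    rw [continuous_iff_continuousAt]
    intro x
    exact (intervalIntegral.integral_hasDerivAt_right ((hcont T hT).intervalIntegrable _ _)
      ((hcont T hT).stronglyMeasurableAtFilter _ _) (hcont T hT).continuousAt).continuousAt
  -- dominated convergence
  have hNum : Tendsto (fun T => ∫ β in Set.Ioi (0:ℝ), (∫ t in (0:ℝ)..β, f t T) * h β)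
      atTop (𝓝 (∫ β in Set.Ioi (0:ℝ), β * h β)) := by
    refine tendsto_integral_filter_of_dominated_convergence
      (fun β => C * (β + 1) * |h β|) ?_ ?_ ?_ ?_
    · filter_upwards [eventually_ge_atTop (2:ℝ)] with T hT
      exact ((hFcT T hT).mul hhc).aestronglyMeasurable
    · filter_upwards [eventually_ge_atTop (2:ℝ)] with T hT
      refine (ae_restrict_iff' measurableSet_Ioi).2 (Eventually.of_forall fun β hβ => ?_)
      have hβ0 : (0:ℝ) < β := hβ
      have hFnn : 0 ≤ ∫ t in (0:ℝ)..β, f t T :=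
        intervalIntegral.integral_nonneg hβ0.le fun x _ => hpos T hT x
      rw [Real.norm_eq_abs, abs_mul, abs_of_nonneg hFnn]
      exact mul_le_mul_of_nonneg_right (hbd β hβ0 T hT) (abs_nonneg _)
    · set W : Polynomial ℝ := Polynomial.C C * (Polynomial.X + 1) *
        (Polynomial.C b * G - Polynomial.derivative G) with hWdef
      have hWint : IntegrableOn (fun x => ‖W.eval x * Real.exp (-b * x)‖) (Set.Ioi 0) :=
        (polyExp_integrableOn W hb).norm
      refine hWint.congr_fun (fun β hβ => ?_) measurableSet_Ioi
      have hβ0 : (0:ℝ) < β := hβ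
      have hW : W.eval β * Real.exp (-b * β) = (C * (β + 1)) * h β := by
        simp [W, hhdef]; ring
      beta_reduce
      rw [Real.norm_eq_abs, hW, abs_mul (C * (β + 1)) (h β),
        abs_of_nonneg (mul_nonneg hC0 (by linarith : (0:ℝ) ≤ β + 1))]
    · refine (ae_restrict_iff' measurableSet_Ioi).2 (Eventually.of_forall fun β hβ => ?_)
      have hβ0 : (0:ℝ) < β := hβ
      have h1 := hB 0 β le_rfl hβ0
      have h2 : Tendsto (fun T => β * ((1 / (β - 0)) * ∫ α in (0:ℝ)..β, f α T))
          atTop (𝓝 (β * 1)) := h1.const_mul β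
      have h3 : Tendsto (fun T => ∫ α in (0:ℝ)..β, f α T) atTop (𝓝 β) := by
        rw [mul_one] at h2
        refine h2.congr fun T => ?_
        rw [sub_zero, ← mul_assoc, mul_one_div_cancel hβ0.ne', one_mul]
      exact h3.mul_const (h β)
  have hconv : Tendsto (fun T =>
      (∫ β in Set.Ioi (0:ℝ), (∫ t in (0:ℝ)..β, f t T) * h β) / D) atTop (𝓝 1) := by
    have h1 := hNum.div_const D
    rw [← key2, div_self (ne_of_gt hDpos)] at h1
    exact h1
  refine Tendsto.congr' ?_ hconv
  filter_upwards [eventually_ge_atTop (2:ℝ)] with T hT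
  rw [key1 T hT]
end
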